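/- arXiv:2107.06620 — 5 statements merged into one kernel-verified Lean document; each statement's English description precedes it below -/
import Mathlib

section
/- For every p ∈ [1,∞] and every f : T → ℂ one has ‖∇f‖_{L^p(μ)} ≤ ‖Df‖_{L^p(μ)} ≤ (1+q)·‖∇f‖_{L^p(μ)}, and moreover ‖∇f‖_{L^{1,∞}(μ)} ≤ ‖Df‖_{L^{1,∞}(μ)} ≤ (1+q)²·‖∇f‖_{L^{1,∞}(μ)}. -/
open MeasureTheory ENNReal Set Function
open scoped NNReal ENNReal Classical

noncomputable section

/-- A homogeneous tree of degree `q+1` with a distinguished end (mythical ancestor),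
encoded through its graph distance `dist`, horocyclic level function `level`,
and predecessor map `pred`. -/
structure FlowTree (q : ℕ) where
  V : Type
  countableV : Countable V
  dist : V → V → ℕ
  level : V → ℤ
  pred : V → V
  dist_self : ∀ x, dist x x = 0
  eq_of_dist_eq_zero : ∀ x y, dist x y = 0 → x = y
  dist_comm : ∀ x y, dist x y = dist y x
  dist_triangle : ∀ x y z, dist x z ≤ dist x y + dist y z
  level_pred : ∀ x, level (pred x) = level x + 1
  succ_finite : ∀ x, Set.Finite {y | pred y = x}
  succ_card : ∀ x, Nat.card {y // pred y = x} = q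
  dist_le : ∀ (x y : V) (n m : ℕ), pred^[n] x = pred^[m] y → dist x y ≤ n + m
  dist_spec : ∀ x y, ∃ n m : ℕ, pred^[n] x = pred^[m] y ∧ n + m = dist x y

namespace FlowTree

variable {q : ℕ} (S : FlowTree q)

/-- The canonical flow measure weight `μ(x) = q^{ℓ(x)}`, as an extended nonnegative real. -/
def w (x : S.V) : ℝ≥0∞ := (q : ℝ≥0∞) ^ ((S.level x : ℤ) : ℝ)

/-- The canonical flow measure weight `μ(x) = q^{ℓ(x)}`, as a real number. -/
def wR (x : S.V) : ℝ := (q : ℝ) ^ (S.level x)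

/-- The canonical flow measure of a set `E ⊆ T`. -/
def muS (E : Set S.V) : ℝ≥0∞ := ∑' x : E, S.w x

/-- The `L^p(μ)` (quasi)norm, `p ∈ [1,∞]`. -/
def lpNorm (p : ℝ≥0∞) {E : Type*} [NNNorm E] (f : S.V → E) : ℝ≥0∞ :=
  if p = ∞ then ⨆ x, (‖f x‖₊ : ℝ≥0∞)
  else (∑' x, (‖f x‖₊ : ℝ≥0∞) ^ p.toReal * S.w x) ^ (1 / p.toReal)

/-- The weak `L^{1,∞}(μ)` quasinorm `sup_{λ>0} λ · μ({|f| > λ})`. -/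
def wkNorm {E : Type*} [NNNorm E] (f : S.V → E) : ℝ≥0∞ :=
  ⨆ t : ℝ≥0, (t : ℝ≥0∞) * S.muS {x | t < ‖f x‖₊}

/-- `Σf(x) = f(𝔭(x))`. -/
def sig (f : S.V → ℂ) : S.V → ℂ := fun x => f (S.pred x)

/-- `Σ*f(x) = (1/q) Σ_{y ∈ succ(x)} f(y)`. -/
def sigStar (f : S.V → ℂ) : S.V → ℂ :=
  fun x => (q : ℂ)⁻¹ * ∑' y : {y | S.pred y = x}, f y.1

/-- The flow gradient `∇ = id − Σ`. -/
def grad (f : S.V → ℂ) : S.V → ℂ := fun x => f x - f (S.pred x)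

/-- `∇* = id − Σ*`. -/
def gradStar (f : S.V → ℂ) : S.V → ℂ := fun x => f x - S.sigStar f x

/-- The modulus of the gradient `Df(x) = Σ_{y ∼ x} |f(x) − f(y)|`. -/
def Dmod (f : S.V → ℂ) : S.V → ℝ :=
  fun x => ∑' y : {y | S.dist x y = 1}, ‖f x - f y.1‖

/-- `Σ̃_n = Σ^n` for `n ≥ 0` and `(Σ*)^{−n}` for `n < 0`. -/
def sigTilde (n : ℤ) (f : S.V → ℂ) : S.V → ℂ :=
  if 0 ≤ n then (S.sig)^[n.toNat] f else (S.sigStar)^[(-n).toNat] f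

/-- `Σ*` acting on real-valued functions. -/
def sigStarR (f : S.V → ℝ) : S.V → ℝ :=
  fun x => (q : ℝ)⁻¹ * ∑' y : {y | S.pred y = x}, f y.1

/-- The flow Laplacian `𝓛 = id − (Σ + Σ*)/2`, acting pointwise on real functions. -/
def lapR (f : S.V → ℝ) : S.V → ℝ :=
  fun x => f x - (f (S.pred x) + S.sigStarR f x) / 2

/-- `δ_y/μ(y)`, the normalized delta at `y`. -/
def deltaMu (y : S.V) : S.V → ℝ := fun z => if z = y then (S.wR y)⁻¹ else 0

/-- The heat kernel `H_t(x,y)` of the flow Laplacian, i.e. `(e^{−t𝓛} (δ_y/μ(y)))(x)`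
computed via the exponential power series of the bounded operator `𝓛`. -/
def Hker (t : ℝ) (x y : S.V) : ℝ :=
  ∑' n : ℕ, ((-t) ^ n / (n.factorial : ℝ)) * ((S.lapR)^[n] (S.deltaMu y)) x

/-- The integral kernel `K(x,y)` of `𝓛^{−1/2}`, by subordination. -/
def Kker (x y : S.V) : ℝ :=
  (Real.sqrt Real.pi)⁻¹ * ∫ t in Set.Ioi (0 : ℝ), S.Hker t x y * t ^ (-(1 : ℝ)/2)

/-- The Riesz transform `𝓡 = ∇𝓛^{−1/2}`, defined on finitely supported functions. -/
def riesz (f : S.V → ℂ) : S.V → ℂ :=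
  fun x => ∑' y, ((S.Kker x y - S.Kker (S.pred x) y : ℝ) : ℂ) * f y * (S.wR y : ℂ)

/-- The integral operator with almost-radial kernel `q^{−ℓ(x)/2} G(d(x,y)) q^{−ℓ(y)/2}`. -/
def kernelOp (G : ℕ → ℂ) (f : S.V → ℂ) : S.V → ℂ :=
  fun x => ∑' y, (((q : ℝ) ^ (-((S.level x : ℤ) : ℝ)/2) * (q : ℝ) ^ (-((S.level y : ℤ) : ℝ)/2) : ℝ) : ℂ)
    * G (S.dist x y) * f y * (S.wR y : ℂ)

/-- The ε-horizontal gradient `∇_ε f(x) = (1/q) Σ_{y ∈ succ(x)} ε(y) f(y)`. -/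
def hgrad (ε f : S.V → ℂ) : S.V → ℂ :=
  fun x => (q : ℂ)⁻¹ * ∑' y : {y | S.pred y = x}, ε y.1 * f y.1

/-- The adjoint ε-horizontal gradient `∇_ε* f(x) = conj(ε(x)) f(𝔭(x))`. -/
def hgradStar (ε f : S.V → ℂ) : S.V → ℂ :=
  fun x => (starRingEnd ℂ) (ε x) * f (S.pred x)

/-- `‖ε‖_∞`. -/
def epsSup (ε : S.V → ℂ) : ℝ≥0∞ := ⨆ x, (‖ε x‖₊ : ℝ≥0∞)

/-- The `L²(μ)` inner product. -/
def inner2 (f g : S.V → ℂ) : ℂ := ∑' x, f x * (starRingEnd ℂ) (g x) * (S.wR x : ℂ)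

/-- `y ≤ x` iff `d(x,y) = ℓ(x) − ℓ(y)`. -/
def le' (y x : S.V) : Prop := (S.dist x y : ℤ) = S.level x - S.level y

/-- Admissible trapezoids of `(T,μ)`. -/
def IsAdmissibleTrapezoid (F : Set S.V) : Prop :=
  (∃ x, F = {x}) ∨
  ∃ (x₀ : S.V) (h1 h2 : ℕ), 0 < h1 ∧ 2 * h1 ≤ h2 ∧ h2 ≤ 12 * h1 ∧
    F = {x | S.le' x x₀ ∧ S.level x₀ - (h2 : ℤ) < S.level x ∧ S.level x ≤ S.level x₀ - (h1 : ℤ)}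

/-- `(1,∞)`-atoms of `(T,μ)`. -/
def IsOneInftyAtom (a : S.V → ℂ) : Prop :=
  ∃ F : Set S.V, S.IsAdmissibleTrapezoid F ∧ Function.support a ⊆ F ∧
    (∑' x, a x * (S.wR x : ℂ)) = 0 ∧ ∀ x, (‖a x‖₊ : ℝ≥0∞) ≤ (S.muS F)⁻¹

end FlowTree

namespace ZRiesz

/-- The discrete Laplacian on `ℤ`. -/
def deltaZ (F : ℤ → ℝ) : ℤ → ℝ := fun n => F n - (F (n + 1) + F (n - 1)) / 2

/-- The heat kernel `h_t^ℤ = e^{−tΔ_ℤ} δ_0` on `ℤ`, via the exponential power series. -/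
def heatZ (t : ℝ) (n : ℤ) : ℝ :=
  ∑' k : ℕ, ((-t) ^ k / (k.factorial : ℝ)) *
    (deltaZ^[k] (fun m => if m = 0 then (1 : ℝ) else 0)) n

/-- Kernel of the Riesz transform on `ℤ`: `k_ℤ(n) = π^{−1/2} ∫₀^∞ (∇_ℤ h_t^ℤ)(n) t^{−1/2} dt`. -/
def kZ (n : ℤ) : ℝ :=
  (Real.sqrt Real.pi)⁻¹ * ∫ t in Set.Ioi (0 : ℝ), (heatZ t n - heatZ t (n + 1)) * t ^ (-(1 : ℝ)/2)

/-- Kernel of the skew-symmetric part: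
`k̃_ℤ(n) = π^{−1/2} ∫₀^∞ (∇̃_ℤ h_t^ℤ)(n) t^{−1/2} dt`. -/
def ktZ (n : ℤ) : ℝ :=
  (Real.sqrt Real.pi)⁻¹ *
    ∫ t in Set.Ioi (0 : ℝ), (heatZ t (n - 1) - heatZ t (n + 1)) * t ^ (-(1 : ℝ)/2)

/-- The closed formula `k̃_ℤ(m) = (2√2/π) m/(m² − 1/4)`. -/
def ktZc (m : ℤ) : ℝ := (2 * Real.sqrt 2 / Real.pi) * (m : ℝ) / ((m : ℝ) ^ 2 - 1/4)

/-- `G(n) = Σ_{k≥0} q^{−(n+2k)/2} k̃_ℤ(n+2k+1)` (subordination kernel version). -/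
def Gint (q : ℕ) (n : ℕ) : ℝ :=
  ∑' k : ℕ, (q : ℝ) ^ (-(((n : ℝ)) + 2 * (k : ℝ))/2) * ktZ ((n : ℤ) + 2 * (k : ℤ) + 1)

/-- `G(n) = Σ_{k≥0} q^{−(n+2k)/2} k̃_ℤ(n+2k+1)` (closed formula version). -/
def Gc (q : ℕ) (n : ℕ) : ℝ :=
  ∑' k : ℕ, (q : ℝ) ^ (-(((n : ℝ)) + 2 * (k : ℝ))/2) * ktZc ((n : ℤ) + 2 * (k : ℤ) + 1)

/-- The `ℓ^p(ℤ)` norm. -/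
def zlpNorm (p : ℝ≥0∞) (F : ℤ → ℂ) : ℝ≥0∞ :=
  if p = ∞ then ⨆ n, (‖F n‖₊ : ℝ≥0∞)
  else (∑' n : ℤ, (‖F n‖₊ : ℝ≥0∞) ^ p.toReal) ^ (1 / p.toReal)

/-- The `ℓ^{1,∞}(ℕ)` quasinorm. -/
def natWk (F : ℕ → ℂ) : ℝ≥0∞ :=
  ⨆ t : ℝ≥0, (t : ℝ≥0∞) * ∑' (_ : {n : ℕ | t < ‖F n‖₊}), (1 : ℝ≥0∞)

end ZRiesz

/-- The punctured boundary `Ω = ∂T \ {ω_*}` of the tree, together with the measure `ν`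
with `ν(Ω_x) = q^{ℓ(x)}`.  `vert ω n` is the vertex `ω_n` of level `n` on the geodesic
`[ω, ω_*]`. -/
structure FlowTreeBoundary {q : ℕ} (S : FlowTree q) where
  Ω : Type
  mΩ : MeasurableSpace Ω
  ν : @MeasureTheory.Measure Ω mΩ
  vert : Ω → ℤ → S.V
  level_vert : ∀ ω n, S.level (vert ω n) = n
  pred_vert : ∀ ω n, S.pred (vert ω n) = vert ω (n + 1)
  vert_surj : ∀ x : S.V, ∃ ω, vert ω (S.level x) = x
  vert_inj : ∀ ω ω', (∀ n, vert ω n = vert ω' n) → ω = ω'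
  meas_cone : ∀ x : S.V, @MeasurableSet Ω mΩ {ω | vert ω (S.level x) = x}
  nu_cone : ∀ x : S.V, ν {ω | vert ω (S.level x) = x} = (q : ℝ≥0∞) ^ ((S.level x : ℤ) : ℝ)

attribute [instance] FlowTreeBoundary.mΩ

namespace FlowTreeBoundary

variable {q : ℕ} {S : FlowTree q} (B : FlowTreeBoundary S)

/-- The product measure `ν × #` on `Ω × ℤ`. -/
def pm : MeasureTheory.Measure (B.Ω × ℤ) := B.ν.prod MeasureTheory.Measure.count

/-- `Ω_x = {ω : x ∈ [ω, ω_*]}`. -/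
def cone (x : S.V) : Set B.Ω := {ω | B.vert ω (S.level x) = x}

/-- The lifting operator `Φf(ω,n) = f(ω_n)`. -/
def lift (f : S.V → ℂ) : B.Ω × ℤ → ℂ := fun p => f (B.vert p.1 p.2)

/-- The lifting operator on `ℝ≥0∞`-valued functions. -/
def liftNN (f : S.V → ℝ≥0∞) : B.Ω × ℤ → ℝ≥0∞ := fun p => f (B.vert p.1 p.2)

/-- The adjoint `Φ*g(x) = ν(Ω_x)^{−1} ∫_{Ω_x} g(ω, ℓ(x)) dν(ω)`. -/
def liftStar (g : B.Ω × ℤ → ℂ) : S.V → ℂ :=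
  fun x => ((B.ν (B.cone x)).toReal)⁻¹ * ∫ ω in B.cone x, g (ω, S.level x) ∂B.ν

/-- The adjoint `Φ*` on `ℝ≥0∞`-valued functions. -/
def liftStarNN (g : B.Ω × ℤ → ℝ≥0∞) : S.V → ℝ≥0∞ :=
  fun x => (B.ν (B.cone x))⁻¹ * ∫⁻ ω in B.cone x, g (ω, S.level x) ∂B.ν

end FlowTreeBoundary

/-- The weak `L^{1,∞}(μ)` quasinorm with respect to a measure. -/
def wkMeas {α : Type*} [MeasurableSpace α] (μ : MeasureTheory.Measure α) (g : α → ℂ) : ℝ≥0∞ :=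
  ⨆ t : ℝ≥0, (t : ℝ≥0∞) * μ {a | t < ‖g a‖₊}

/-- The weak `L^{1,∞}(μ)` quasinorm for `ℝ≥0∞`-valued functions. -/
def wkMeasNN {α : Type*} [MeasurableSpace α] (μ : MeasureTheory.Measure α) (g : α → ℝ≥0∞) :
    ℝ≥0∞ :=
  ⨆ t : ℝ≥0, (t : ℝ≥0∞) * μ {a | (t : ℝ≥0∞) < g a}

end

/-! The neighbours of `x` are `𝔭(x)` and the `q` vertices of `succ(x)`, and
`|f(x) - f(𝔭(x))| = |∇f(x)|`, `|f(x) - f(y)| = |∇f(y)|` for `y ∈ succ(x)`. Hence `Df(x)` is the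
sum of `|∇f|` over the `1 + q` vertices of `{x} ∪ succ(x)`, which gives `|∇f| ≤ Df` pointwise.
For the upper `L^p` bound, `(Df)^p ≤ (1+q)^{p-1} Σ |∇f|^p` by convexity, and summing over
`succ(x)` against `μ(x)` costs a factor `q` since `μ(𝔭(y)) = q μ(y)`. For the weak bound,
`{Df > (1+q)t} ⊆ A ∪ 𝔭(A)` with `A = {|∇f| > t}`, and `μ(𝔭(A)) ≤ q μ(A)`. -/

namespace FlowTree

variable {q : ℕ} (S : FlowTree q)

lemma pred_ne_self (x : S.V) : S.pred x ≠ x := fun h => by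
  have := S.level_pred x
  rw [h] at this
  omega

lemma pred_pred_ne_self (x : S.V) : S.pred (S.pred x) ≠ x := fun h => by
  have h₁ := S.level_pred x
  have h₂ := S.level_pred (S.pred x)
  rw [h] at h₂
  omega

lemma dist_eq_one_iff {x y : S.V} : S.dist x y = 1 ↔ y = S.pred x ∨ S.pred y = x := by
  constructor
  · intro h
    obtain ⟨n, m, heq, hnm⟩ := S.dist_spec x y
    rcases (by omega : (n = 0 ∧ m = 1) ∨ (n = 1 ∧ m = 0)) with ⟨rfl, rfl⟩ | ⟨rfl, rfl⟩
    · exact .inr heq.symm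
    · exact .inl heq.symm
  · intro h
    have hle : S.dist x y ≤ 1 := by
      rcases h with rfl | rfl
      · simpa using S.dist_le x (S.pred x) 1 0 rfl
      · simpa using S.dist_le (S.pred y) y 0 1 rfl
    have hne : x ≠ y := by
      rintro rfl
      rcases h with h | h
      exacts [S.pred_ne_self x h.symm, S.pred_ne_self x h]
    have := mt (S.eq_of_dist_eq_zero x y) hne
    omega

noncomputable def succs (x : S.V) : Finset S.V := (S.succ_finite x).toFinset

@[simp]
lemma mem_succs {x y : S.V} : y ∈ S.succs x ↔ S.pred y = x := by
  simp [succs]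

lemma card_succs (x : S.V) : (S.succs x).card = q := by
  have h := S.succ_card x
  rwa [← Set.coe_ofPred, Nat.card_coe_set_eq, Set.ncard_eq_toFinset_card _ (S.succ_finite x)] at h

lemma self_notMem_succs (x : S.V) : x ∉ S.succs x := by
  simpa using S.pred_ne_self x

lemma pred_notMem_succs (x : S.V) : S.pred x ∉ S.succs x := by
  simpa using S.pred_pred_ne_self x

lemma card_insert_self_succs (x : S.V) : (insert x (S.succs x)).card = 1 + q := by
  rw [Finset.card_insert_of_notMem (S.self_notMem_succs x), card_succs, add_comm]

lemma coe_insert_pred_succs (x : S.V) :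
    (↑(insert (S.pred x) (S.succs x)) : Set S.V) = {y | S.dist x y = 1} := by
  ext y
  simp [S.dist_eq_one_iff]

lemma q_ne_zero (x : S.V) : q ≠ 0 := by
  rw [← S.card_succs (S.pred x)]
  exact Finset.card_ne_zero_of_mem (S.mem_succs.2 rfl)

lemma w_pred (y : S.V) : S.w (S.pred y) = q * S.w y := by
  rw [w, w, S.level_pred y, Int.cast_add, Int.cast_one,
    ENNReal.rpow_add _ _ (by exact_mod_cast S.q_ne_zero y) (ENNReal.natCast_ne_top q),
    ENNReal.rpow_one, mul_comm]

lemma nnnorm_Dmod (f : S.V → ℂ) (x : S.V) :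
    ‖S.Dmod f x‖₊ = ∑ y ∈ insert x (S.succs x), ‖S.grad f y‖₊ := by
  have hD : S.Dmod f x = ∑ y ∈ insert x (S.succs x), ‖S.grad f y‖ := by
    rw [Dmod, ← S.coe_insert_pred_succs, Finset.tsum_subtype' _ fun y => ‖f x - f y‖,
      Finset.sum_insert (S.pred_notMem_succs x), Finset.sum_insert (S.self_notMem_succs x)]
    congr 1
    refine Finset.sum_congr rfl fun y hy => ?_
    rw [← S.mem_succs.1 hy, grad, norm_sub_rev]
  rw [← NNReal.coe_inj, coe_nnnorm, hD, Real.norm_of_nonneg (by positivity),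
    NNReal.coe_sum]
  rfl

lemma tsum_sum_succs (c : S.V → ℝ≥0∞) : ∑' x, ∑ y ∈ S.succs x, c y = ∑' y, c y := by
  rw [← ENNReal.tsum_fiberwise c S.pred]
  refine tsum_congr fun x => ?_
  rw [← Finset.tsum_subtype', succs, Set.Finite.coe_toFinset]
  rfl

lemma tsum_sum_insert_self_succs_mul_w (c : S.V → ℝ≥0∞) :
    ∑' x, (∑ y ∈ insert x (S.succs x), c y) * S.w x = (1 + q) * ∑' x, c x * S.w x := by
  have hsuccs : ∀ x, (∑ y ∈ S.succs x, c y) * S.w x = ∑ y ∈ S.succs x, q * (c y * S.w y) :=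
    fun x => by
      rw [Finset.sum_mul]
      refine Finset.sum_congr rfl fun y hy => ?_
      rw [← S.mem_succs.1 hy, S.w_pred]
      ring
  simp_rw [Finset.sum_insert (S.self_notMem_succs _), add_mul, hsuccs]
  rw [ENNReal.tsum_add, S.tsum_sum_succs, ENNReal.tsum_mul_left]
  ring

lemma lpNorm_mono {E F : Type*} [NNNorm E] [NNNorm F] (p : ℝ≥0∞) {g : S.V → E} {h : S.V → F}
    (hgh : ∀ x, ‖g x‖₊ ≤ ‖h x‖₊) : S.lpNorm p g ≤ S.lpNorm p h := by
  unfold lpNorm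
  split_ifs
  · exact iSup_mono fun x => ENNReal.coe_le_coe.2 (hgh x)
  · refine ENNReal.rpow_le_rpow (ENNReal.tsum_le_tsum fun x => ?_) (by positivity)
    gcongr
    exact hgh x

lemma wkNorm_mono {E F : Type*} [NNNorm E] [NNNorm F] {g : S.V → E} {h : S.V → F}
    (hgh : ∀ x, ‖g x‖₊ ≤ ‖h x‖₊) : S.wkNorm g ≤ S.wkNorm h :=
  iSup_mono fun _ => mul_le_mul_right
    (ENNReal.tsum_mono_subtype S.w fun x hx => lt_of_lt_of_le hx (hgh x)) _

lemma nnnorm_grad_le_nnnorm_Dmod (f : S.V → ℂ) (x : S.V) : ‖S.grad f x‖₊ ≤ ‖S.Dmod f x‖₊ := by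
  rw [nnnorm_Dmod]
  exact Finset.single_le_sum (f := fun y => ‖S.grad f y‖₊) (fun _ _ => zero_le)
    (Finset.mem_insert_self x _)

lemma coe_nnnorm_Dmod (f : S.V → ℂ) (x : S.V) :
    (‖S.Dmod f x‖₊ : ℝ≥0∞) = ∑ y ∈ insert x (S.succs x), (‖S.grad f y‖₊ : ℝ≥0∞) := by
  rw [nnnorm_Dmod, ENNReal.ofNNReal_finsetSum]

lemma cast_card_insert_self_succs {R : Type*} [AddMonoidWithOne R] (x : S.V) :
    ((insert x (S.succs x)).card : R) = 1 + q := by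
  rw [S.card_insert_self_succs, Nat.cast_add, Nat.cast_one]

lemma lpNorm_top_Dmod_le (f : S.V → ℂ) :
    S.lpNorm ∞ (S.Dmod f) ≤ (1 + q) * S.lpNorm ∞ (S.grad f) := by
  simp only [lpNorm, if_true]
  refine iSup_le fun x => ?_
  rw [coe_nnnorm_Dmod, ← S.cast_card_insert_self_succs x, ← nsmul_eq_mul]
  exact Finset.sum_le_card_nsmul _ _ _ fun y _ =>
    le_iSup (fun y => (‖S.grad f y‖₊ : ℝ≥0∞)) y

lemma rpow_nnnorm_Dmod_le (f : S.V → ℂ) (x : S.V) {r : ℝ} (hr : 1 ≤ r) :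
    (‖S.Dmod f x‖₊ : ℝ≥0∞) ^ r
      ≤ (1 + q) ^ (r - 1) * ∑ y ∈ insert x (S.succs x), (‖S.grad f y‖₊ : ℝ≥0∞) ^ r := by
  have h := ENNReal.rpow_sum_le_const_mul_sum_rpow (insert x (S.succs x))
    (fun y => (‖S.grad f y‖₊ : ℝ≥0∞)) hr
  rwa [S.cast_card_insert_self_succs, ← coe_nnnorm_Dmod] at h

lemma tsum_rpow_nnnorm_Dmod_mul_w_le (f : S.V → ℂ) {r : ℝ} (hr : 1 ≤ r) :
    ∑' x, (‖S.Dmod f x‖₊ : ℝ≥0∞) ^ r * S.w x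
      ≤ (1 + q) ^ r * ∑' x, (‖S.grad f x‖₊ : ℝ≥0∞) ^ r * S.w x := by
  have hpow : (1 + q : ℝ≥0∞) ^ (r - 1) * (1 + q) = (1 + q) ^ r := by
    calc (1 + q : ℝ≥0∞) ^ (r - 1) * (1 + q) = (1 + q) ^ (r - 1) * (1 + q) ^ (1 : ℝ) := by
          rw [ENNReal.rpow_one]
      _ = (1 + q) ^ r := by rw [← ENNReal.rpow_add _ _ (by simp) (by simp), sub_add_cancel]
  calc ∑' x, (‖S.Dmod f x‖₊ : ℝ≥0∞) ^ r * S.w x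
      ≤ ∑' x, (1 + q) ^ (r - 1) *
          ((∑ y ∈ insert x (S.succs x), (‖S.grad f y‖₊ : ℝ≥0∞) ^ r) * S.w x) := by
        refine ENNReal.tsum_le_tsum fun x => ?_
        rw [← mul_assoc]
        gcongr
        exact S.rpow_nnnorm_Dmod_le f x hr
    _ = (1 + q) ^ r * ∑' x, (‖S.grad f x‖₊ : ℝ≥0∞) ^ r * S.w x := by
        rw [ENNReal.tsum_mul_left, tsum_sum_insert_self_succs_mul_w, ← mul_assoc, hpow]

lemma lpNorm_Dmod_le (f : S.V → ℂ) {p : ℝ≥0∞} (hp : 1 ≤ p) :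
    S.lpNorm p (S.Dmod f) ≤ (1 + q) * S.lpNorm p (S.grad f) := by
  rcases eq_or_ne p ∞ with rfl | hp_top
  · exact S.lpNorm_top_Dmod_le f
  have hr : 1 ≤ p.toReal := by
    simpa using ENNReal.toReal_mono hp_top hp
  have hr₀ : 0 < 1 / p.toReal := by positivity
  simp only [lpNorm, if_neg hp_top]
  calc (∑' x, (‖S.Dmod f x‖₊ : ℝ≥0∞) ^ p.toReal * S.w x) ^ (1 / p.toReal)
      ≤ ((1 + q) ^ p.toReal * ∑' x, (‖S.grad f x‖₊ : ℝ≥0∞) ^ p.toReal * S.w x)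
          ^ (1 / p.toReal) :=
        ENNReal.rpow_le_rpow (S.tsum_rpow_nnnorm_Dmod_mul_w_le f hr) hr₀.le
    _ = (1 + q) * (∑' x, (‖S.grad f x‖₊ : ℝ≥0∞) ^ p.toReal * S.w x) ^ (1 / p.toReal) := by
        rw [ENNReal.mul_rpow_of_nonneg _ _ hr₀.le, ← ENNReal.rpow_mul,
          mul_one_div_cancel (by positivity), ENNReal.rpow_one]

lemma muS_union_image_pred_le (A : Set S.V) : S.muS (A ∪ S.pred '' A) ≤ (1 + q) * S.muS A := by
  have himage : S.muS (S.pred '' A) ≤ q * S.muS A :=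
    calc ∑' y : S.pred '' A, S.w y
        ≤ ∑' x : A, S.w (S.pred x) :=
          ENNReal.tsum_le_tsum_comp_of_surjective Set.imageFactorization_surjective _
      _ = q * S.muS A := by
          simp_rw [S.w_pred]
          exact ENNReal.tsum_mul_left
  calc S.muS (A ∪ S.pred '' A) ≤ S.muS A + S.muS (S.pred '' A) := ENNReal.tsum_union_le _ _ _
    _ ≤ (1 + q) * S.muS A := by
        rw [add_mul, one_mul]
        gcongr

lemma setOf_lt_nnnorm_Dmod_subset (f : S.V → ℂ) (t : ℝ≥0) :
    {x | (1 + q) * t < ‖S.Dmod f x‖₊}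
      ⊆ {x | t < ‖S.grad f x‖₊} ∪ S.pred '' {x | t < ‖S.grad f x‖₊} := by
  intro x hx
  have hsum : ∑ _y ∈ insert x (S.succs x), t < ∑ y ∈ insert x (S.succs x), ‖S.grad f y‖₊ := by
    rwa [Finset.sum_const, nsmul_eq_mul, S.cast_card_insert_self_succs, ← nnnorm_Dmod]
  obtain ⟨y, hy, hty⟩ := Finset.exists_lt_of_sum_lt hsum
  rcases Finset.mem_insert.1 hy with rfl | hy
  · exact .inl hty
  · exact .inr ⟨y, hty, S.mem_succs.1 hy⟩

lemma wkNorm_Dmod_le (f : S.V → ℂ) :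
    S.wkNorm (S.Dmod f) ≤ (1 + q) ^ 2 * S.wkNorm (S.grad f) := by
  refine iSup_le fun t => ?_
  set s : ℝ≥0 := t / (1 + q)
  have hts : (t : ℝ≥0∞) = (1 + q) * s := by
    rw [← ENNReal.coe_natCast, ← ENNReal.coe_one, ← ENNReal.coe_add, ← ENNReal.coe_mul,
      mul_div_cancel₀ _ (by positivity)]
  have hs : (1 + q) * s = t := by exact_mod_cast hts.symm
  calc (t : ℝ≥0∞) * S.muS {x | t < ‖S.Dmod f x‖₊}
      ≤ t * ((1 + q) * S.muS {x | s < ‖S.grad f x‖₊}) := by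
        gcongr
        refine (ENNReal.tsum_mono_subtype S.w ?_).trans (S.muS_union_image_pred_le _)
        simpa only [hs] using S.setOf_lt_nnnorm_Dmod_subset f s
    _ = (1 + q) ^ 2 * (s * S.muS {x | s < ‖S.grad f x‖₊}) := by
        rw [hts]
        ring
    _ ≤ (1 + q) ^ 2 * S.wkNorm (S.grad f) := by
        gcongr
        exact le_iSup (fun s : ℝ≥0 => (s : ℝ≥0∞) * S.muS {x | s < ‖S.grad f x‖₊}) s

end FlowTree

theorem gradient_equivalence_general {q : ℕ} (S : FlowTree q) (f : S.V → ℂ) :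
    (∀ p : ℝ≥0∞, 1 ≤ p →
      S.lpNorm p (S.grad f) ≤ S.lpNorm p (S.Dmod f) ∧
      S.lpNorm p (S.Dmod f) ≤ (1 + q : ℝ≥0∞) * S.lpNorm p (S.grad f)) ∧
    (S.wkNorm (S.grad f) ≤ S.wkNorm (S.Dmod f) ∧
      S.wkNorm (S.Dmod f) ≤ (1 + q : ℝ≥0∞) ^ 2 * S.wkNorm (S.grad f)) :=
  ⟨fun p hp => ⟨S.lpNorm_mono p (S.nnnorm_grad_le_nnnorm_Dmod f), S.lpNorm_Dmod_le f hp⟩,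
    S.wkNorm_mono (S.nnnorm_grad_le_nnnorm_Dmod f), S.wkNorm_Dmod_le f⟩

/-- comparability of the flow gradient `∇` and the modulus of the gradient `D`
in `L^p(μ)` for `p ∈ [1,∞]` and in `L^{1,∞}(μ)`. -/
theorem gradient_equivalence {q : ℕ} (hq : 2 ≤ q) (S : FlowTree q) (f : S.V → ℂ) :
    (∀ p : ℝ≥0∞, 1 ≤ p →
      S.lpNorm p (S.grad f) ≤ S.lpNorm p (S.Dmod f) ∧
      S.lpNorm p (S.Dmod f) ≤ (1 + q : ℝ≥0∞) * S.lpNorm p (S.grad f)) ∧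
    (S.wkNorm (S.grad f) ≤ S.wkNorm (S.Dmod f) ∧
      S.wkNorm (S.Dmod f) ≤ (1 + q : ℝ≥0∞) ^ 2 * S.wkNorm (S.grad f)) :=
  gradient_equivalence_general S f
end

section
/- For all t > 0 and x, y ∈ T, the heat kernel of the flow Laplacian satisfies H_t(x,y) = q^{−ℓ(x)/2} · J_t(d(x,y)) · q^{−ℓ(y)/2}, where J_t(n) = Σ_{k≥0} q^{−(n+2k)/2} · (h_t^ℤ(n+2k) − h_t^ℤ(n+2k+2)) for n ∈ ℕ (an absolutely convergent series). -/
open MeasureTheory ENNReal Set Function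
open scoped NNReal ENNReal Classical

noncomputable section
set_option linter.dupNamespace false

namespace ZRiesz

noncomputable def hseq : ℕ → ℤ → ℝ := fun m => deltaZ^[m] (fun n => if n = 0 then (1:ℝ) else 0)

lemma hseq_zero (j : ℤ) : hseq 0 j = if j = 0 then 1 else 0 := rfl

lemma hseq_succ (m : ℕ) : hseq (m+1) = deltaZ (hseq m) := by
  show deltaZ^[m+1] _ = _
  rw [Function.iterate_succ_apply']
  rfl

lemma heatZ_eq (t : ℝ) (n : ℤ) :
    heatZ t n = ∑' k : ℕ, ((-t) ^ k / (k.factorial : ℝ)) * hseq k n := rfl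

lemma hseq_even (m : ℕ) : ∀ j, hseq m (-j) = hseq m j := by
  induction m with
  | zero => intro j; simp [hseq_zero, neg_eq_zero]
  | succ m ih =>
    intro j
    rw [hseq_succ]
    unfold deltaZ
    have h1 : -j + 1 = -(j - 1) := by ring
    have h2 : -j - 1 = -(j + 1) := by ring
    rw [h1, h2, ih, ih, ih]
    ring

lemma hseq_bound (m : ℕ) : ∀ j, |hseq m j| ≤ 2 ^ m := by
  induction m with
  | zero => intro j; rw [hseq_zero]; split <;> norm_num
  | succ m ih =>
    intro j
    rw [hseq_succ]
    show |hseq m j - (hseq m (j+1) + hseq m (j-1))/2| ≤ _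
    have h1 := ih j; have h2 := ih (j+1); have h3 := ih (j-1)
    rw [abs_le] at h1 h2 h3 ⊢
    rw [pow_succ]
    constructor <;> [linarith; linarith]

lemma hseq_supp (m : ℕ) : ∀ j : ℤ, (m : ℤ) < j → hseq m j = 0 := by
  induction m with
  | zero => intro j hj; rw [hseq_zero, if_neg (by omega)]
  | succ m ih =>
    intro j hj
    rw [hseq_succ]
    show hseq m j - (hseq m (j+1) + hseq m (j-1))/2 = 0
    rw [ih j (by push_cast at hj ⊢; omega), ih (j+1) (by push_cast at hj ⊢; omega),
        ih (j-1) (by push_cast at hj ⊢; omega)]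
    ring

noncomputable def GG (s : ℝ) (m n : ℕ) : ℝ :=
  ∑ k ∈ Finset.range (m+1), s⁻¹ ^ (n + 2*k) *
    (hseq m ((n:ℤ) + 2*(k:ℤ)) - hseq m ((n:ℤ) + 2*(k:ℤ) + 2))

lemma GG_eq (s : ℝ) (m n N : ℕ) (hN : m + 1 ≤ N) :
    GG s m n = ∑ k ∈ Finset.range N, s⁻¹ ^ (n + 2*k) *
      (hseq m ((n:ℤ) + 2*(k:ℤ)) - hseq m ((n:ℤ) + 2*(k:ℤ) + 2)) := by
  unfold GG
  apply Finset.sum_subset (Finset.range_subset_range.2 hN)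
  intro k _ hk
  simp only [Finset.mem_range, not_lt] at hk
  rw [hseq_supp m _ (by omega), hseq_supp m _ (by omega)]
  ring

lemma per_term (s : ℝ) (hs : s ≠ 0) (H : ℤ → ℝ) (j : ℕ) (a : ℤ) :
    s⁻¹ ^ (j+1) * (deltaZ H a - deltaZ H (a+2)) =
    s⁻¹ ^ (j+1) * (H a - H (a+2)) -
      (s⁻¹ * (s⁻¹ ^ j * (H (a-1) - H (a+1))) + s * (s⁻¹ ^ (j+2) * (H (a+1) - H (a+3))))/2 := by
  unfold deltaZ
  have h3 : s * s⁻¹ = 1 := mul_inv_cancel₀ hs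
  have h1 : s⁻¹ ^ (j+1) = s⁻¹ ^ j * s⁻¹ := pow_succ _ _
  have h2 : s⁻¹ ^ (j+2) = s⁻¹ ^ j * s⁻¹ * s⁻¹ := by rw [pow_succ, pow_succ]
  rw [h1, h2]
  have ha2 : a + 2 + 1 = a + 3 := by ring
  have ha3 : a + 2 - 1 = a + 1 := by ring
  rw [ha2, ha3]
  linear_combination (s⁻¹ ^ j * s⁻¹ * (H (a+1) - H (a+3)) / 2) * h3


lemma GG_rec1 (s : ℝ) (hs : s ≠ 0) (m n : ℕ) :
    GG s (m+1) (n+1) = GG s m (n+1) - (s⁻¹ * GG s m n + s * GG s m (n+2))/2 := by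
  have h3 : s * s⁻¹ = 1 := mul_inv_cancel₀ hs
  rw [GG_eq s (m+1) (n+1) (m+2) (by omega), GG_eq s m (n+1) (m+2) (by omega),
      GG_eq s m n (m+2) (by omega), GG_eq s m (n+2) (m+2) (by omega),
      Finset.mul_sum, Finset.mul_sum, ← Finset.sum_add_distrib, Finset.sum_div,
      ← Finset.sum_sub_distrib]
  refine Finset.sum_congr rfl fun k _ => ?_
  rw [hseq_succ]
  simp only [deltaZ]
  push_cast
  linear_combination (norm := ring_nf)
    (s⁻¹^(n+2*k) * s⁻¹ * (hseq m ((n:ℤ)+2*k+2) - hseq m ((n:ℤ)+2*k+4)) / 2) * h3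

lemma GG_rec0 (s : ℝ) (hs : s ≠ 0) (m : ℕ) :
    GG s (m+1) 0 = GG s m 0 - (s⁻¹ + s) * GG s m 1 / 2 := by
  have h3 : s * s⁻¹ = 1 := mul_inv_cancel₀ hs
  set F : ℕ → ℝ := fun k => s⁻¹^(2*k) * (hseq m (2*(k:ℤ)-1) - hseq m (2*(k:ℤ)+1)) with hF
  have hB1 : s * GG s m 1 = ∑ k ∈ Finset.range (m+2),
      s⁻¹^(2*k) * (hseq m (2*(k:ℤ)+1) - hseq m (2*(k:ℤ)+3)) := by
    rw [GG_eq s m 1 (m+2) (by omega), Finset.mul_sum]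
    refine Finset.sum_congr rfl fun k _ => ?_
    push_cast
    linear_combination (norm := ring_nf)
      (s⁻¹^(2*k) * (hseq m (2*(k:ℤ)+1) - hseq m (2*(k:ℤ)+3))) * h3
  have hB2 : s⁻¹ * GG s m 1 = ∑ k ∈ Finset.range (m+2), F k := by
    rw [GG_eq s m 1 (m+2) (by omega), Finset.mul_sum]
    simp only [Nat.cast_one]
    have step : ∀ k ∈ Finset.range (m+2),
        s⁻¹ * (s⁻¹^(1+2*k) * (hseq m ((1:ℤ)+2*(k:ℤ)) - hseq m ((1:ℤ)+2*(k:ℤ)+2))) = F (k+1) := by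
      intro k _
      rw [hF]
      push_cast
      ring_nf
    rw [Finset.sum_congr rfl step]
    have h0 : F 0 = 0 := by
      show s⁻¹^(2*0) * (hseq m (2*((0:ℕ):ℤ)-1) - hseq m (2*((0:ℕ):ℤ)+1)) = 0
      rw [show (2*((0:ℕ):ℤ)-1) = -1 by norm_num, show (2*((0:ℕ):ℤ)+1) = 1 by norm_num,
        hseq_even m 1]
      ring
    have hN : F (m+2) = 0 := by
      show s⁻¹^(2*(m+2)) * (hseq m (2*((m+2:ℕ):ℤ)-1) - hseq m (2*((m+2:ℕ):ℤ)+1)) = 0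
      rw [hseq_supp m _ (by push_cast; omega), hseq_supp m _ (by push_cast; omega)]
      ring
    have := Finset.sum_range_succ' F (m+2)
    rw [Finset.sum_range_succ F (m+2), hN, add_zero, h0, add_zero] at this
    exact this.symm
  rw [show (s⁻¹ + s) * GG s m 1 = s⁻¹ * GG s m 1 + s * GG s m 1 by ring, hB1, hB2,
      GG_eq s (m+1) 0 (m+2) (by omega), GG_eq s m 0 (m+2) (by omega),
      ← Finset.sum_add_distrib, Finset.sum_div, ← Finset.sum_sub_distrib]
  refine Finset.sum_congr rfl fun k _ => ?_
  rw [hseq_succ, hF]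
  simp only [deltaZ]
  push_cast
  ring_nf


def acoef (t : ℝ) (m : ℕ) : ℝ := (-t) ^ m / (m.factorial : ℝ)

lemma heatZ_eq' (t : ℝ) (n : ℤ) :
    heatZ t n = ∑' k : ℕ, acoef t k * hseq k n := rfl

lemma GG_zero (s : ℝ) (n : ℕ) : GG s 0 n = if n = 0 then 1 else 0 := by
  unfold GG
  rw [Finset.sum_range_one]
  simp only [Nat.cast_zero, mul_zero, add_zero, hseq_zero]
  by_cases h : n = 0
  · subst h; norm_num
  · rw [if_neg h, if_neg (by exact_mod_cast h), if_neg (by omega)]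
    simp

end ZRiesz

namespace FlowTree

variable {q : ℕ} (S : FlowTree q)


lemma level_iterate (x : S.V) : ∀ n : ℕ, S.level (S.pred^[n] x) = S.level x + n := by
  intro n
  induction n with
  | zero => simp
  | succ n ih =>
    rw [Function.iterate_succ_apply', S.level_pred, ih]
    push_cast; ring

lemma dist_level (x y : S.V) : ∃ n m : ℕ, S.pred^[n] x = S.pred^[m] y ∧
    n + m = S.dist x y ∧ (m : ℤ) - n = S.level x - S.level y := by
  obtain ⟨n, m, h, hd⟩ := S.dist_spec x y
  refine ⟨n, m, h, hd, ?_⟩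
  have h2 := congrArg S.level h
  rw [level_iterate, level_iterate] at h2
  omega

lemma abs_level_le_dist (x y : S.V) : |S.level x - S.level y| ≤ (S.dist x y : ℤ) := by
  obtain ⟨n, m, _, hd, hl⟩ := S.dist_level x y
  rw [abs_le]
  omega

lemma dist_parity (x y : S.V) : ((S.dist x y : ℤ) - (S.level x - S.level y)) % 2 = 0 := by
  obtain ⟨n, m, _, hd, hl⟩ := S.dist_level x y
  omega

lemma dist_pred_self (x : S.V) : S.dist x (S.pred x) = 1 := by
  have h1 : S.dist x (S.pred x) ≤ 1 := by
    have := S.dist_le x (S.pred x) 1 0 (by simp)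
    simpa using this
  have h0 : S.dist x (S.pred x) ≠ 0 := by
    intro h
    have h2 := S.eq_of_dist_eq_zero _ _ h
    have hl := S.level_pred x
    rw [← h2] at hl
    omega
  omega

lemma dist_pred_of_le (x y : S.V) (h : (S.dist x y : ℤ) = S.level x - S.level y) :
    S.dist (S.pred x) y = S.dist x y + 1 := by
  obtain ⟨n, m, hnm, hd, hl⟩ := S.dist_level x y
  have hn0 : n = 0 := by omega
  subst hn0
  simp only [Function.iterate_zero_apply] at hnm
  have hub : S.dist (S.pred x) y ≤ S.dist x y + 1 := by
    have : S.pred^[0] (S.pred x) = S.pred^[m+1] y := by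
      simp only [Function.iterate_zero_apply, Function.iterate_succ_apply']
      rw [hnm]
    have := S.dist_le (S.pred x) y 0 (m+1) this
    omega
  have hlb := S.abs_level_le_dist (S.pred x) y
  rw [abs_le] at hlb
  have := S.level_pred x
  omega

lemma dist_pred_of_not_le (x y : S.V) (h : (S.dist x y : ℤ) ≠ S.level x - S.level y) :
    S.dist (S.pred x) y + 1 = S.dist x y := by
  obtain ⟨n, m, hnm, hd, hl⟩ := S.dist_level x y
  have hn1 : 1 ≤ n := by
    rcases Nat.eq_zero_or_pos n with h0 | h1
    · exfalso; omega
    · omega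
  obtain ⟨k, rfl⟩ : ∃ k, n = k + 1 := ⟨n - 1, by omega⟩
  have hub : S.dist (S.pred x) y ≤ k + m := by
    apply S.dist_le (S.pred x) y k m
    rw [← Function.iterate_succ_apply]
    exact hnm
  have hlb : S.dist x y ≤ 1 + S.dist (S.pred x) y := by
    calc S.dist x y ≤ S.dist x (S.pred x) + S.dist (S.pred x) y := S.dist_triangle _ _ _
    _ = 1 + S.dist (S.pred x) y := by rw [dist_pred_self]
  omega

lemma succ_level (x s : S.V) (hs : S.pred s = x) : S.level s = S.level x - 1 := by
  have := S.level_pred s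
  rw [hs] at this
  omega

lemma dist_succ_self (x s : S.V) (hs : S.pred s = x) : S.dist x s = 1 := by
  rw [S.dist_comm, ← hs, dist_pred_self]

lemma succ_dist_cases (x y s : S.V) (hs : S.pred s = x) :
    S.dist s y = S.dist x y + 1 ∨ (1 ≤ S.dist x y ∧ S.dist s y + 1 = S.dist x y) := by
  obtain ⟨n, m, hnm, hd, hl⟩ := S.dist_level x y
  have hub : S.dist s y ≤ (n+1) + m := by
    apply S.dist_le s y (n+1) m
    rw [Function.iterate_succ_apply, hs]
    exact hnm
  have hlb : S.dist x y ≤ 1 + S.dist s y := by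
    calc S.dist x y ≤ S.dist x s + S.dist s y := S.dist_triangle _ _ _
    _ = 1 + S.dist s y := by rw [dist_succ_self S x s hs]
  have hp1 := S.dist_parity s y
  have hp2 := S.dist_parity x y
  have hls := S.succ_level x s hs
  omega

lemma succ_dist_eq_sub (x y s : S.V) (hs : S.pred s = x)
    (h : S.dist s y + 1 = S.dist x y) :
    (S.dist x y : ℤ) = S.level x - S.level y ∧ s = S.pred^[S.dist x y - 1] y := by
  obtain ⟨n, m, hnm, hd, hl⟩ := S.dist_level x y
  obtain ⟨n', m', hnm', hd', hl'⟩ := S.dist_level s y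
  have hls := S.succ_level x s hs
  have hn' : n' = n := by omega
  have hm' : (m' : ℤ) = (m : ℤ) - 1 := by omega
  rw [hn'] at hnm'
  rcases Nat.eq_zero_or_pos n with h0 | h1
  · rw [h0] at hnm hnm'
    simp only [Function.iterate_zero_apply] at hnm hnm'
    constructor
    · omega
    · rw [hnm']
      congr 1
      omega
  · exfalso
    obtain ⟨k, hk⟩ : ∃ k, n = k + 1 := ⟨n - 1, by omega⟩
    obtain ⟨j, hj⟩ : ∃ j, m = j + 1 := ⟨m - 1, by omega⟩
    have hm'j : m' = j := by omega
    rw [hk, hm'j, Function.iterate_succ_apply, hs] at hnm'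
    have := S.dist_le x y k j hnm'
    omega

lemma exists_succ_dist (x y : S.V)
    (h : (S.dist x y : ℤ) = S.level x - S.level y) (hd : 1 ≤ S.dist x y) :
    S.pred (S.pred^[S.dist x y - 1] y) = x ∧
      S.dist (S.pred^[S.dist x y - 1] y) y + 1 = S.dist x y := by
  obtain ⟨n, m, hnm, hdd, hl⟩ := S.dist_level x y
  have hn0 : n = 0 := by omega
  subst hn0
  simp only [Function.iterate_zero_apply] at hnm
  have hm : m = S.dist x y := by omega
  constructor
  · rw [← Function.iterate_succ_apply' S.pred (S.dist x y - 1) y,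
        show (S.dist x y - 1).succ = m by omega, ← hnm]
  · have hub : S.dist (S.pred^[S.dist x y - 1] y) y ≤ 0 + (S.dist x y - 1) :=
      S.dist_le _ y 0 (S.dist x y - 1) (by simp)
    have hlb := S.abs_level_le_dist (S.pred^[S.dist x y - 1] y) y
    rw [abs_le] at hlb
    have hlev := S.level_iterate y (S.dist x y - 1)
    rw [hlev] at hlb
    have : ((S.dist x y - 1 : ℕ) : ℤ) = (S.dist x y : ℤ) - 1 := by omega
    omega


lemma succ_sum (x y : S.V) (G : ℕ → ℝ) :
    ∑' s : {z | S.pred z = x}, G (S.dist s.1 y) =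
      if (S.dist x y : ℤ) = S.level x - S.level y ∧ x ≠ y then
        G (S.dist x y - 1) + ((q : ℝ) - 1) * G (S.dist x y + 1)
      else (q : ℝ) * G (S.dist x y + 1) := by
  haveI : Fintype {z | S.pred z = x} := (S.succ_finite x).fintype
  rw [tsum_fintype]
  have hcard : Fintype.card {z | S.pred z = x} = q := by
    rw [← Nat.card_eq_fintype_card]
    exact S.succ_card x
  by_cases hc : (S.dist x y : ℤ) = S.level x - S.level y ∧ x ≠ y
  · rw [if_pos hc]
    obtain ⟨h1, h2⟩ := hc
    have hd1 : 1 ≤ S.dist x y := by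
      rcases Nat.eq_zero_or_pos (S.dist x y) with h0 | h
      · exact absurd (S.eq_of_dist_eq_zero _ _ h0) h2
      · omega
    obtain ⟨hs0, hd0⟩ := exists_succ_dist S x y h1 hd1
    set s₀ : S.V := S.pred^[S.dist x y - 1] y with hs₀
    have key : ∀ s : {z | S.pred z = x}, G (S.dist s.1 y) =
        if s = (⟨s₀, hs0⟩ : {z | S.pred z = x}) then G (S.dist x y - 1)
        else G (S.dist x y + 1) := by
      intro s
      by_cases he : s = (⟨s₀, hs0⟩ : {z | S.pred z = x})
      · rw [if_pos he, he]
        have hco : (↑(⟨s₀, hs0⟩ : {z | S.pred z = x}) : S.V) = s₀ := rfl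
        rw [hco]
        congr 1
        omega
      · rw [if_neg he]
        rcases succ_dist_cases S x y s.1 s.2 with hcase | ⟨_, hcase⟩
        · rw [hcase]
        · exfalso
          obtain ⟨_, hseq⟩ := succ_dist_eq_sub S x y s.1 s.2 hcase
          exact he (Subtype.ext hseq)
    rw [Finset.sum_congr rfl (fun s _ => key s)]
    have split : ∀ s : {z | S.pred z = x},
        (if s = (⟨s₀, hs0⟩ : {z | S.pred z = x}) then G (S.dist x y - 1) else G (S.dist x y + 1))
        = G (S.dist x y + 1) + (if s = (⟨s₀, hs0⟩ : {z | S.pred z = x})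
            then G (S.dist x y - 1) - G (S.dist x y + 1) else 0) := by
      intro s; split <;> ring
    rw [Finset.sum_congr rfl (fun s _ => split s), Finset.sum_add_distrib, Finset.sum_const,
      Finset.sum_ite_eq' Finset.univ (⟨s₀, hs0⟩ : {z | S.pred z = x})
        (fun _ => G (S.dist x y - 1) - G (S.dist x y + 1)),
      if_pos (Finset.mem_univ _), Finset.card_univ, hcard, nsmul_eq_mul]
    ring
  · rw [if_neg hc]
    have key : ∀ s : {z | S.pred z = x}, G (S.dist s.1 y) = G (S.dist x y + 1) := by
      intro s
      rcases succ_dist_cases S x y s.1 s.2 with hcase | ⟨hd1, hcase⟩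
      · rw [hcase]
      · exfalso
        obtain ⟨ha, _⟩ := succ_dist_eq_sub S x y s.1 s.2 hcase
        apply hc
        refine ⟨ha, ?_⟩
        intro hxy
        rw [hxy, S.dist_self] at hd1
        omega
    rw [Finset.sum_congr rfl (fun s _ => key s), Finset.sum_const, Finset.card_univ, hcard,
      nsmul_eq_mul]



def cf (z : S.V) : ℝ := (q : ℝ) ^ (-((S.level z : ℤ) : ℝ)/2)

lemma cf_pred (hq0 : (0:ℝ) < q) (x : S.V) :
    S.cf (S.pred x) = (Real.sqrt q)⁻¹ * S.cf x := by
  unfold cf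
  rw [S.level_pred]
  push_cast
  rw [show (-((S.level x : ℝ) + 1)/2) = (-(1:ℝ)/2) + (-(S.level x : ℝ)/2) by ring,
    Real.rpow_add hq0]
  congr 1
  rw [show (-(1:ℝ)/2) = -((1:ℝ)/2) by ring, Real.rpow_neg hq0.le, Real.sqrt_eq_rpow]

lemma cf_succ (hq0 : (0:ℝ) < q) (x s : S.V) (hs : S.pred s = x) :
    S.cf s = Real.sqrt q * S.cf x := by
  unfold cf
  rw [S.succ_level x s hs]
  push_cast
  rw [show (-((S.level x : ℝ) - 1)/2) = ((1:ℝ)/2) + (-(S.level x : ℝ)/2) by ring,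
    Real.rpow_add hq0]
  congr 1
  rw [Real.sqrt_eq_rpow]

lemma cf_sq (hq0 : (0:ℝ) < q) (y : S.V) : S.cf y * S.cf y = (S.wR y)⁻¹ := by
  unfold cf wR
  rw [← Real.rpow_add hq0,
    show (-((S.level y : ℤ) : ℝ)/2 + -((S.level y : ℤ) : ℝ)/2) = -((S.level y : ℤ) : ℝ) by ring,
    Real.rpow_neg hq0.le, Real.rpow_intCast]

lemma lapR_apply (f : S.V → ℝ) (x : S.V) :
    S.lapR f x = f x - (f (S.pred x) + S.sigStarR f x) / 2 := rfl

lemma lap_iter_eq (hq : 2 ≤ q) (y : S.V) :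
    ∀ (m : ℕ) (x : S.V), (S.lapR)^[m] (S.deltaMu y) x
      = S.cf x * ZRiesz.GG (Real.sqrt q) m (S.dist x y) * S.cf y := by
  have hq0 : (0:ℝ) < q := by
    have : 0 < q := by omega
    exact_mod_cast this
  have hsq0 : 0 < Real.sqrt q := Real.sqrt_pos.2 hq0
  have hsqne : Real.sqrt q ≠ 0 := ne_of_gt hsq0
  have hsq2 : Real.sqrt q * Real.sqrt q = (q:ℝ) := Real.mul_self_sqrt hq0.le
  intro m
  induction m with
  | zero =>
    intro x
    simp only [Function.iterate_zero_apply]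
    rw [ZRiesz.GG_zero]
    show (if x = y then (S.wR y)⁻¹ else 0) = _
    by_cases h : x = y
    · subst h
      rw [if_pos rfl, S.dist_self, if_pos rfl, mul_one, S.cf_sq hq0]
    · rw [if_neg h, if_neg (fun h0 => h (S.eq_of_dist_eq_zero _ _ h0))]
      ring
  | succ m ih =>
    intro x
    rw [Function.iterate_succ_apply']
    have hφ : (S.lapR)^[m] (S.deltaMu y) =
        fun z => S.cf z * ZRiesz.GG (Real.sqrt q) m (S.dist z y) * S.cf y := funext ih
    rw [hφ, S.lapR_apply]
    have hsig : S.sigStarR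
        (fun z => S.cf z * ZRiesz.GG (Real.sqrt q) m (S.dist z y) * S.cf y) x =
        (q:ℝ)⁻¹ * ((Real.sqrt q * S.cf x * S.cf y) *
          (if (S.dist x y : ℤ) = S.level x - S.level y ∧ x ≠ y then
            ZRiesz.GG (Real.sqrt q) m (S.dist x y - 1)
              + ((q : ℝ) - 1) * ZRiesz.GG (Real.sqrt q) m (S.dist x y + 1)
          else (q : ℝ) * ZRiesz.GG (Real.sqrt q) m (S.dist x y + 1))) := by
    -- sigStarR f x = q⁻¹ * tsum
      unfold sigStarR
      congr 1
      rw [← S.succ_sum x y (fun n => ZRiesz.GG (Real.sqrt q) m n), ← tsum_mul_left]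
      apply tsum_congr
      intro s
      beta_reduce
      rw [S.cf_succ hq0 x s.1 s.2]
      ring
    rw [hsig]
    by_cases hcond : (S.dist x y : ℤ) = S.level x - S.level y ∧ x ≠ y
    · rw [if_pos hcond]
      obtain ⟨h1, h2⟩ := hcond
      have hd1 : 1 ≤ S.dist x y := by
        rcases Nat.eq_zero_or_pos (S.dist x y) with h0 | h
        · exact absurd (S.eq_of_dist_eq_zero _ _ h0) h2
        · omega
      rw [S.dist_pred_of_le x y h1, S.cf_pred hq0]
      obtain ⟨n0, hn0⟩ : ∃ n0, S.dist x y = n0 + 1 := ⟨S.dist x y - 1, by omega⟩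
      rw [hn0]
      rw [show n0 + 1 - 1 = n0 by omega, show n0 + 1 + 1 = n0 + 2 by omega]
      rw [ZRiesz.GG_rec1 (Real.sqrt q) hsqne m n0]
      generalize hg : Real.sqrt ((q:ℕ):ℝ) = r at hsq2 hsqne ⊢
      rw [← hsq2]
      field_simp
      ring
    · rw [if_neg hcond]
      by_cases hxy : x = y
      · subst hxy
        have hd0 : S.dist x x = 0 := S.dist_self x
        have h1 : (S.dist x x : ℤ) = S.level x - S.level x := by rw [hd0]; ring
        rw [S.dist_pred_of_le x x h1, S.cf_pred hq0, hd0]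
        rw [show (0:ℕ) + 1 = 1 by rfl]
        rw [ZRiesz.GG_rec0 (Real.sqrt q) hsqne m]
        generalize hg : Real.sqrt ((q:ℕ):ℝ) = r at hsq2 hsqne ⊢
        rw [← hsq2]
        field_simp
      · have h1 : (S.dist x y : ℤ) ≠ S.level x - S.level y := by
          intro hcc; exact hcond ⟨hcc, hxy⟩
        have hd1 := S.dist_pred_of_not_le x y h1
        have hdpos : 1 ≤ S.dist x y := by omega
        obtain ⟨n0, hn0⟩ : ∃ n0, S.dist x y = n0 + 1 := ⟨S.dist x y - 1, by omega⟩
        have hpn : S.dist (S.pred x) y = n0 := by omega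
        rw [S.cf_pred hq0, hpn, hn0, show n0 + 1 + 1 = n0 + 2 by omega]
        rw [ZRiesz.GG_rec1 (Real.sqrt q) hsqne m n0]
        generalize hg : Real.sqrt ((q:ℕ):ℝ) = r at hsq2 hsqne ⊢
        rw [← hsq2]
        field_simp

end FlowTree

end

open ZRiesz in
set_option maxHeartbeats 1000000 in
/-- for `t > 0` and `x, y ∈ T`, the heat kernel of the flow Laplacian satisfies
`H_t(x,y) = q^{−ℓ(x)/2} J_t(d(x,y)) q^{−ℓ(y)/2}`, where
`J_t(n) = Σ_{k≥0} q^{−(n+2k)/2} (h_t^ℤ(n+2k) − h_t^ℤ(n+2k+2))`, an absolutely convergent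
series. -/
theorem heat_kernel_flow_formula {q : ℕ} (hq : 2 ≤ q) (S : FlowTree q)
    (t : ℝ) (ht : 0 < t) (x y : S.V) :
    Summable (fun k : ℕ => |(q : ℝ) ^ (-((S.dist x y : ℝ) + 2 * (k : ℝ))/2) *
        (heatZ t ((S.dist x y : ℤ) + 2 * (k : ℤ))
          - heatZ t ((S.dist x y : ℤ) + 2 * (k : ℤ) + 2))|) ∧
    S.Hker t x y = (q : ℝ) ^ (-((S.level x : ℤ) : ℝ)/2) *
      (∑' k : ℕ, (q : ℝ) ^ (-((S.dist x y : ℝ) + 2 * (k : ℝ))/2) *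
        (heatZ t ((S.dist x y : ℤ) + 2 * (k : ℤ))
          - heatZ t ((S.dist x y : ℤ) + 2 * (k : ℤ) + 2))) *
      (q : ℝ) ^ (-((S.level y : ℤ) : ℝ)/2) := by
  have hq0 : (0:ℝ) < q := by
    have h : 0 < q := by omega
    exact_mod_cast h
  have hsq0 : 0 < Real.sqrt (q:ℝ) := Real.sqrt_pos.2 hq0
  have hsqne : Real.sqrt (q:ℝ) ≠ 0 := ne_of_gt hsq0
  have hsq1 : 1 < Real.sqrt (q:ℝ) := by
    rw [show (1:ℝ) = Real.sqrt 1 by simp]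
    exact Real.sqrt_lt_sqrt (by norm_num) (by exact_mod_cast hq)
  have hinv0 : 0 ≤ (Real.sqrt (q:ℝ))⁻¹ := inv_nonneg.2 hsq0.le
  have hinv1 : (Real.sqrt (q:ℝ))⁻¹ < 1 := inv_lt_one_of_one_lt₀ hsq1
  set sq := Real.sqrt (q:ℝ) with hsqdef
  set d := S.dist x y with hd
  have hconv : ∀ k : ℕ, (q : ℝ) ^ (-((d : ℝ) + 2 * (k : ℝ))/2) = sq⁻¹ ^ (d + 2*k) := by
    intro k
    rw [hsqdef, Real.sqrt_eq_rpow, ← Real.rpow_neg_one ((q:ℝ) ^ ((1:ℝ)/2)),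
      ← Real.rpow_natCast (((q:ℝ) ^ ((1:ℝ)/2)) ^ (-1:ℝ)) (d + 2*k),
      ← Real.rpow_mul hq0.le, ← Real.rpow_mul hq0.le]
    congr 1
    push_cast
    ring
  have habs : ∀ m, |acoef t m| = t ^ m / (m.factorial : ℝ) := by
    intro m
    rw [acoef, abs_div, abs_pow, abs_neg, abs_of_pos ht,
      abs_of_pos (by positivity : (0:ℝ) < (m.factorial:ℝ))]
  have hsumh : ∀ j : ℤ, Summable fun m => acoef t m * hseq m j := by
    intro j
    apply Summable.of_abs
    apply Summable.of_nonneg_of_le (fun m => abs_nonneg _)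
      (fun m => ?_) (Real.summable_pow_div_factorial (2*t))
    calc |acoef t m * hseq m j| = t ^ m / (m.factorial : ℝ) * |hseq m j| := by
          rw [abs_mul, habs]
      _ ≤ t ^ m / (m.factorial : ℝ) * 2 ^ m := by
          apply mul_le_mul_of_nonneg_left (hseq_bound m j) (by positivity)
      _ = (2*t) ^ m / (m.factorial : ℝ) := by rw [mul_pow]; ring
  -- the double-indexed family
  set g : ℕ → ℕ → ℝ := fun m k => acoef t m * (sq⁻¹ ^ (d + 2*k) *
    (hseq m ((d:ℤ) + 2*(k:ℤ)) - hseq m ((d:ℤ) + 2*(k:ℤ) + 2))) with hg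
  have hbound : ∀ m k, |g m k| ≤ ((2*t) ^ m / (m.factorial:ℝ) * 2) * ((sq⁻¹^2) ^ k) := by
    intro m k
    calc |g m k| = t ^ m / (m.factorial : ℝ) * (sq⁻¹ ^ (d + 2*k) *
          |hseq m ((d:ℤ) + 2*(k:ℤ)) - hseq m ((d:ℤ) + 2*(k:ℤ) + 2)|) := by
          rw [hg, abs_mul, abs_mul, habs, abs_of_nonneg (pow_nonneg hinv0 _)]
      _ ≤ t ^ m / (m.factorial : ℝ) * (sq⁻¹ ^ (2*k) * (2 * 2 ^ m)) := by
          apply mul_le_mul_of_nonneg_left ?_ (by positivity)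
          apply mul_le_mul (pow_le_pow_of_le_one hinv0 hinv1.le (by omega)) ?_
            (abs_nonneg _) (pow_nonneg hinv0 _)
          calc |hseq m ((d:ℤ) + 2*(k:ℤ)) - hseq m ((d:ℤ) + 2*(k:ℤ) + 2)|
              ≤ |hseq m ((d:ℤ) + 2*(k:ℤ))| + |hseq m ((d:ℤ) + 2*(k:ℤ) + 2)| := abs_sub _ _
            _ ≤ 2 ^ m + 2 ^ m := add_le_add (hseq_bound m _) (hseq_bound m _)
            _ = 2 * 2 ^ m := by ring
      _ = ((2*t) ^ m / (m.factorial:ℝ) * 2) * ((sq⁻¹^2) ^ k) := by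
          rw [mul_pow, ← pow_mul]
          ring
  have hgeo : Summable (fun k : ℕ => (sq⁻¹^2) ^ k) :=
    summable_geometric_of_lt_one (by positivity)
      (pow_lt_one₀ hinv0 hinv1 (by norm_num))
  have hBsum : Summable (fun p : ℕ × ℕ =>
      ((2*t) ^ p.1 / (p.1.factorial:ℝ) * 2) * ((sq⁻¹^2) ^ p.2)) :=
    Summable.mul_of_nonneg ((Real.summable_pow_div_factorial (2*t)).mul_right 2) hgeo
      (fun m => by positivity) (fun k => by positivity)
  have hsumF : Summable (Function.uncurry g) := by
    apply Summable.of_abs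
    apply Summable.of_nonneg_of_le (fun p => abs_nonneg _) ?_ hBsum
    rintro ⟨m, k⟩
    exact hbound m k
  -- heatZ bound
  have hE0 : (0:ℝ) ≤ ∑' m : ℕ, (2*t) ^ m / (m.factorial : ℝ) := by
    apply tsum_nonneg
    intro m
    positivity
  have hheat : ∀ j : ℤ, |heatZ t j| ≤ ∑' m : ℕ, (2*t) ^ m / (m.factorial : ℝ) := by
    intro j
    rw [heatZ_eq']
    have h1 : Summable fun m => ‖acoef t m * hseq m j‖ := by
      simpa only [Real.norm_eq_abs] using (hsumh j).abs
    calc |∑' m, acoef t m * hseq m j| ≤ ∑' m, |acoef t m * hseq m j| := by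
          simpa only [Real.norm_eq_abs] using norm_tsum_le_tsum_norm h1
      _ ≤ ∑' m : ℕ, (2*t) ^ m / (m.factorial : ℝ) := by
          apply Summable.tsum_le_tsum ?_ (by simpa only [Real.norm_eq_abs] using h1)
            (Real.summable_pow_div_factorial (2*t))
          intro m
          calc |acoef t m * hseq m j| = t ^ m / (m.factorial : ℝ) * |hseq m j| := by
                rw [abs_mul, habs]
            _ ≤ t ^ m / (m.factorial : ℝ) * 2 ^ m := by
                apply mul_le_mul_of_nonneg_left (hseq_bound m j) (by positivity)
            _ = (2*t) ^ m / (m.factorial : ℝ) := by rw [mul_pow]; ring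
  constructor
  · -- summability claim
    apply Summable.of_nonneg_of_le (fun k => abs_nonneg _) (fun k => ?_)
      (hgeo.mul_left (2 * (∑' m : ℕ, (2*t) ^ m / (m.factorial : ℝ)) * sq⁻¹ ^ d))
    rw [hconv k, abs_mul, abs_of_nonneg (pow_nonneg hinv0 _)]
    calc sq⁻¹ ^ (d + 2*k) * |heatZ t ((d:ℤ) + 2*(k:ℤ)) - heatZ t ((d:ℤ) + 2*(k:ℤ) + 2)|
        ≤ sq⁻¹ ^ (d + 2*k) * (2 * (∑' m : ℕ, (2*t) ^ m / (m.factorial : ℝ))) := by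
          apply mul_le_mul_of_nonneg_left ?_ (pow_nonneg hinv0 _)
          calc |heatZ t ((d:ℤ) + 2*(k:ℤ)) - heatZ t ((d:ℤ) + 2*(k:ℤ) + 2)|
              ≤ |heatZ t ((d:ℤ) + 2*(k:ℤ))| + |heatZ t ((d:ℤ) + 2*(k:ℤ) + 2)| := abs_sub _ _
            _ ≤ (∑' m : ℕ, (2*t) ^ m / (m.factorial : ℝ))
                + (∑' m : ℕ, (2*t) ^ m / (m.factorial : ℝ)) := add_le_add (hheat _) (hheat _)
            _ = 2 * (∑' m : ℕ, (2*t) ^ m / (m.factorial : ℝ)) := by ring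
      _ = 2 * (∑' m : ℕ, (2*t) ^ m / (m.factorial : ℝ)) * sq⁻¹ ^ d * (sq⁻¹^2) ^ k := by
          rw [pow_add, pow_mul]
          ring
  · -- the identity
    have heq1 : S.Hker t x y = ∑' m, (S.cf x * S.cf y) * (acoef t m * GG sq m d) := by
      unfold FlowTree.Hker
      apply tsum_congr
      intro m
      rw [S.lap_iter_eq hq y m x, ← hsqdef, ← hd, acoef]
      ring
    have heq2 : ∀ m, acoef t m * GG sq m d = ∑' k, g m k := by
      intro m
      have h2 : (∑' k : ℕ, sq⁻¹ ^ (d + 2*k) *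
          (hseq m ((d:ℤ) + 2*(k:ℤ)) - hseq m ((d:ℤ) + 2*(k:ℤ) + 2))) = GG sq m d := by
        rw [GG]
        apply tsum_eq_sum
        intro k hk
        rw [Finset.mem_range, not_lt] at hk
        rw [hseq_supp m _ (by omega), hseq_supp m _ (by omega)]
        ring
      rw [← h2, ← tsum_mul_left]
    have heq4 : ∀ k, (∑' m, g m k) = sq⁻¹ ^ (d + 2*k) *
        (heatZ t ((d:ℤ) + 2*(k:ℤ)) - heatZ t ((d:ℤ) + 2*(k:ℤ) + 2)) := by
      intro k
      have h1 : ∀ m, g m k = sq⁻¹ ^ (d + 2*k) *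
          (acoef t m * hseq m ((d:ℤ) + 2*(k:ℤ)) - acoef t m * hseq m ((d:ℤ) + 2*(k:ℤ) + 2)) := by
        intro m
        rw [hg]
        ring
      rw [tsum_congr h1, tsum_mul_left, Summable.tsum_sub (hsumh _) (hsumh _), heatZ_eq', heatZ_eq']
    calc S.Hker t x y = ∑' m, (S.cf x * S.cf y) * (acoef t m * GG sq m d) := heq1
      _ = (S.cf x * S.cf y) * ∑' m, (acoef t m * GG sq m d) := tsum_mul_left
      _ = (S.cf x * S.cf y) * ∑' m, ∑' k, g m k := by rw [tsum_congr heq2]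
      _ = (S.cf x * S.cf y) * ∑' k, ∑' m, g m k := by rw [(Summable.tsum_comm hsumF).symm]
      _ = (S.cf x * S.cf y) * ∑' k, sq⁻¹ ^ (d + 2*k) *
            (heatZ t ((d:ℤ) + 2*(k:ℤ)) - heatZ t ((d:ℤ) + 2*(k:ℤ) + 2)) := by
          rw [tsum_congr heq4]
      _ = (S.cf x * S.cf y) * ∑' k : ℕ, (q : ℝ) ^ (-((d : ℝ) + 2 * (k : ℝ))/2) *
            (heatZ t ((d:ℤ) + 2*(k:ℤ)) - heatZ t ((d:ℤ) + 2*(k:ℤ) + 2)) := by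
          congr 1
          apply tsum_congr
          intro k
          rw [hconv k]
      _ = _ := by
          show S.cf x * S.cf y * _ = S.cf x * _ * S.cf y
          ring
end

section
/- Let A be a linear operator on ℂ^T and α a linear operator on ℂ^{Ω×ℤ}. Then: (i) A is of weak type (1,1) with respect to μ if and only if ΦAΦ* is of weak type (1,1) with respect to ν×#, and the weak (1,1) norms are equal; (ii) for every p ∈ [1,∞], A is bounded on L^p(μ) if and only if ΦAΦ* is bounded on L^p(ν×#), and the operator norms are equal; (iii) for every p ∈ [1,∞], if α is bounded on L^p(ν×#), then Φ*αΦ is bounded on L^p(μ) with operator norm not greater than that of α. -/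
open MeasureTheory ENNReal Set Function
open scoped NNReal ENNReal Classical

/-! For each level `n`, the cones `Ω_x` with `ℓ(x) = n` partition `Ω` and `ν(Ω_x) = μ(x)`, so
`(ω, n) ↦ ω_n` pushes `ν × #` forward to `μ`; hence `Φ` preserves every `L^p` norm and the weak
`L^{1,∞}` quasinorm. On the other side, `Φ*g(x)` is the integral of `g(·, ℓ(x))` against the
conditional probability `ν[|Ω_x]`, so `Φ*Φ = id` and, by Jensen's inequality,
`|Φ*g|^p ≤ Φ*(|g|^p)`, while `Σ_x Φ*G(x) μ(x) = ∫ G d(ν × #)`: thus `Φ*` is an `L^p`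
contraction. All three statements follow by composing these facts with `A` or `α`. -/

open ProbabilityTheory

attribute [local instance] FlowTree.countableV

theorem rpow_lintegral_le_lintegral_rpow {α : Type*} [MeasurableSpace α] (μ : Measure α)
    [IsProbabilityMeasure μ] (h : α → ℝ≥0∞) {r : ℝ} (hr : 1 ≤ r) :
    (∫⁻ a, h a ∂μ) ^ r ≤ ∫⁻ a, h a ^ r ∂μ := by
  obtain ⟨g, hg, hgh, hint⟩ := exists_measurable_le_lintegral_eq μ h
  have hr0 : r ≠ 0 := by positivity
  have hLp := eLpNorm_le_eLpNorm_of_exponent_le (μ := μ) (p := 1) (q := ENNReal.ofReal r)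
    (ENNReal.one_le_ofReal.2 hr) hg.aestronglyMeasurable
  rw [eLpNorm_one_eq_lintegral_enorm, eLpNorm_eq_lintegral_rpow_enorm_toReal
    (ENNReal.ofReal_pos.2 (by linarith)).ne' ofReal_ne_top,
    ENNReal.toReal_ofReal (by linarith)] at hLp
  simp only [enorm_eq_self] at hLp
  calc (∫⁻ a, h a ∂μ) ^ r = (∫⁻ a, g a ∂μ) ^ r := by rw [hint]
    _ ≤ ((∫⁻ a, g a ^ r ∂μ) ^ (1 / r)) ^ r := by gcongr
    _ = ∫⁻ a, g a ^ r ∂μ := by rw [one_div, ENNReal.rpow_inv_rpow hr0]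
    _ ≤ ∫⁻ a, h a ^ r ∂μ := lintegral_mono fun a => by gcongr; exact hgh a

namespace FlowTree

variable {q : ℕ} (S : FlowTree q)

theorem w_ne_zero (hq : q ≠ 0) (x : S.V) : S.w x ≠ 0 :=
  (ENNReal.rpow_pos (by exact_mod_cast Nat.pos_of_ne_zero hq) (natCast_ne_top q)).ne'

theorem w_ne_top (hq : q ≠ 0) (x : S.V) : S.w x ≠ ∞ :=
  ENNReal.rpow_ne_top_of_ne_zero (by simpa using hq) (natCast_ne_top q)

theorem tsum_eq_tsum_level (g : S.V → ℝ≥0∞) :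
    ∑' x, g x = ∑' (n : ℤ) (x : {x : S.V // S.level x = n}), g x := by
  rw [← (Equiv.sigmaFiberEquiv S.level).tsum_eq, ENNReal.tsum_sigma']
  rfl

end FlowTree

namespace FlowTreeBoundary

variable {q : ℕ} {S : FlowTree q} (B : FlowTreeBoundary S)

theorem measurableSet_cone (x : S.V) : MeasurableSet (B.cone x) := B.meas_cone x

theorem nu_cone_eq_w (x : S.V) : B.ν (B.cone x) = S.w x := B.nu_cone x

theorem mem_cone_vert (ω : B.Ω) (n : ℤ) : ω ∈ B.cone (B.vert ω n) := by
  simp [cone, B.level_vert]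

theorem eq_of_mem_cone {x y : S.V} {ω : B.Ω} (hx : ω ∈ B.cone x) (hy : ω ∈ B.cone y)
    (h : S.level x = S.level y) : x = y := by
  rw [← show B.vert ω (S.level x) = x from hx, ← show B.vert ω (S.level y) = y from hy, h]

theorem sigmaFinite_nu (hq : q ≠ 0) : SigmaFinite B.ν := by
  refine Measure.sigmaFinite_of_countable (countable_range B.cone) ?_ ?_
  · rintro _ ⟨x, rfl⟩
    exact (B.nu_cone_eq_w x).trans_lt (S.w_ne_top hq x).lt_top
  · exact sUnion_eq_univ_iff.2 fun ω => ⟨_, mem_range_self _, B.mem_cone_vert ω 0⟩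

theorem pm_eq_sum (hq : q ≠ 0) :
    B.pm = Measure.sum fun n : ℤ => B.ν.map fun ω => (ω, n) := by
  have := B.sigmaFinite_nu hq
  rw [pm, show (Measure.count : Measure ℤ) = Measure.sum Measure.dirac from rfl,
    Measure.prod_sum_right]
  simp only [Measure.prod_dirac]

theorem lintegral_pm (hq : q ≠ 0) (G : B.Ω × ℤ → ℝ≥0∞) :
    ∫⁻ p, G p ∂B.pm = ∑' n : ℤ, ∫⁻ ω, G (ω, n) ∂B.ν := by
  rw [B.pm_eq_sum hq, lintegral_sum_measure]
  exact tsum_congr fun n => (measurableEmbedding_prod_mk_right n).lintegral_map G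

theorem ae_nu_of_ae_pm (hq : q ≠ 0) {P : B.Ω × ℤ → Prop} (h : ∀ᵐ p ∂B.pm, P p) (n : ℤ) :
    ∀ᵐ ω ∂B.ν, P (ω, n) := by
  rw [B.pm_eq_sum hq] at h
  exact (measurableEmbedding_prod_mk_right n).ae_map_iff.1 (ae_mono (Measure.le_sum _ n) h)

theorem lintegral_eq_tsum_setLIntegral_cone (n : ℤ) (G : B.Ω → ℝ≥0∞) :
    ∫⁻ ω, G ω ∂B.ν = ∑' x : {x : S.V // S.level x = n}, ∫⁻ ω in B.cone x, G ω ∂B.ν := by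
  have hcover : ⋃ x : {x : S.V // S.level x = n}, B.cone x = univ :=
    iUnion_eq_univ_iff.2 fun ω => ⟨⟨B.vert ω n, B.level_vert ω n⟩, B.mem_cone_vert ω n⟩
  have hdisj : Pairwise (Disjoint on fun x : {x : S.V // S.level x = n} => B.cone x) :=
    fun x y hxy => Set.disjoint_left.2 fun ω hx hy =>
      hxy (Subtype.ext (B.eq_of_mem_cone hx hy (x.2.trans y.2.symm)))
  rw [← setLIntegral_univ, ← hcover,
    lintegral_iUnion (s := fun x : {x : S.V // S.level x = n} => B.cone x)
      (fun x => B.measurableSet_cone x) hdisj]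

theorem pm_setOf_vert_eq_muS (hq : q ≠ 0) (P : S.V → Prop) :
    B.pm {p | P (B.vert p.1 p.2)} = S.muS {x | P x} := by
  have := B.sigmaFinite_nu hq
  have hunion : {p : B.Ω × ℤ | P (B.vert p.1 p.2)}
      = ⋃ x : {x : S.V // P x}, B.cone x ×ˢ ({S.level x} : Set ℤ) := by
    ext ⟨ω, m⟩
    simp only [mem_ofPred_eq, mem_iUnion, mem_prod, mem_singleton_iff]
    constructor
    · exact fun h => ⟨⟨B.vert ω m, h⟩, B.mem_cone_vert ω m, (B.level_vert ω m).symm⟩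
    · rintro ⟨⟨x, hx⟩, hω, rfl⟩
      rwa [show B.vert ω (S.level x) = x from hω]
  have hdisj : Pairwise (Disjoint on fun x : {x : S.V // P x} =>
      B.cone x ×ˢ ({S.level x} : Set ℤ)) := by
    refine fun x y hxy => Set.disjoint_left.2 ?_
    rintro ⟨ω, m⟩ ⟨hx, rfl⟩ ⟨hy, hm⟩
    exact hxy (Subtype.ext (B.eq_of_mem_cone hx hy hm))
  rw [hunion, measure_iUnion hdisj fun x => (B.measurableSet_cone x).prod
    (measurableSet_singleton _), FlowTree.muS]
  refine tsum_congr fun x => ?_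
  rw [pm, Measure.prod_prod, B.nu_cone_eq_w, Measure.count_singleton, mul_one]

theorem wkMeas_lift (hq : q ≠ 0) (f : S.V → ℂ) : wkMeas B.pm (B.lift f) = S.wkNorm f :=
  iSup_congr fun t => by rw [← B.pm_setOf_vert_eq_muS hq]; rfl

theorem liftStar_eq_integral_cond (g : B.Ω × ℤ → ℂ) (x : S.V) :
    B.liftStar g x = ∫ ω, g (ω, S.level x) ∂B.ν[|B.cone x] := by
  rw [ProbabilityTheory.cond, integral_smul_measure, ENNReal.toReal_inv, Complex.real_smul]
  rfl

theorem liftStarNN_eq_lintegral_cond (G : B.Ω × ℤ → ℝ≥0∞) (x : S.V) :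
    B.liftStarNN G x = ∫⁻ ω, G (ω, S.level x) ∂B.ν[|B.cone x] := by
  rw [ProbabilityTheory.cond, lintegral_smul_measure, smul_eq_mul]
  rfl

theorem isProbabilityMeasure_cond_cone (hq : q ≠ 0) (x : S.V) :
    IsProbabilityMeasure (B.ν[|B.cone x]) :=
  cond_isProbabilityMeasure_of_finite (by rw [B.nu_cone_eq_w]; exact S.w_ne_zero hq x)
    (by rw [B.nu_cone_eq_w]; exact S.w_ne_top hq x)

theorem ae_cond_cone_vert (x : S.V) : ∀ᵐ ω ∂B.ν[|B.cone x], B.vert ω (S.level x) = x :=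
  ae_cond_mem (B.measurableSet_cone x)

theorem liftStar_lift (hq : q ≠ 0) (f : S.V → ℂ) : B.liftStar (B.lift f) = f := by
  funext x
  have := B.isProbabilityMeasure_cond_cone hq x
  have hconst : (fun ω => B.lift f (ω, S.level x)) =ᵐ[B.ν[|B.cone x]] fun _ => f x :=
    (B.ae_cond_cone_vert x).mono fun ω hω => congrArg f hω
  rw [liftStar_eq_integral_cond, integral_congr_ae hconst, integral_const, probReal_univ,
    one_smul]

theorem liftStarNN_liftNN (hq : q ≠ 0) (φ : S.V → ℝ≥0∞) : B.liftStarNN (B.liftNN φ) = φ := by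
  funext x
  have := B.isProbabilityMeasure_cond_cone hq x
  have hconst : (fun ω => B.liftNN φ (ω, S.level x)) =ᵐ[B.ν[|B.cone x]] fun _ => φ x :=
    (B.ae_cond_cone_vert x).mono fun ω hω => congrArg φ hω
  rw [liftStarNN_eq_lintegral_cond, lintegral_congr_ae hconst, lintegral_const, measure_univ,
    mul_one]

theorem enorm_liftStar_le (g : B.Ω × ℤ → ℂ) (x : S.V) :
    ‖B.liftStar g x‖ₑ ≤ B.liftStarNN (fun p => ‖g p‖ₑ) x := by
  rw [liftStar_eq_integral_cond, liftStarNN_eq_lintegral_cond]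
  exact enorm_integral_le_lintegral_enorm _

theorem rpow_liftStarNN_le (hq : q ≠ 0) (G : B.Ω × ℤ → ℝ≥0∞) {r : ℝ} (hr : 1 ≤ r) (x : S.V) :
    B.liftStarNN G x ^ r ≤ B.liftStarNN (fun p => G p ^ r) x := by
  have := B.isProbabilityMeasure_cond_cone hq x
  rw [liftStarNN_eq_lintegral_cond, liftStarNN_eq_lintegral_cond]
  exact rpow_lintegral_le_lintegral_rpow _ _ hr

theorem liftStarNN_le_essSup (hq : q ≠ 0) (G : B.Ω × ℤ → ℝ≥0∞) (x : S.V) :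
    B.liftStarNN G x ≤ essSup G B.pm := by
  have := B.isProbabilityMeasure_cond_cone hq x
  rw [liftStarNN_eq_lintegral_cond]
  calc ∫⁻ ω, G (ω, S.level x) ∂B.ν[|B.cone x] ≤ ∫⁻ _, essSup G B.pm ∂B.ν[|B.cone x] :=
        lintegral_mono_ae (cond_absolutelyContinuous.ae_le
          (B.ae_nu_of_ae_pm hq (ae_le_essSup G) (S.level x)))
    _ = essSup G B.pm := by rw [lintegral_const, measure_univ, mul_one]

theorem tsum_liftStarNN_mul_w (hq : q ≠ 0) (G : B.Ω × ℤ → ℝ≥0∞) :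
    ∑' x, B.liftStarNN G x * S.w x = ∫⁻ p, G p ∂B.pm := by
  have hcone : ∀ x, B.liftStarNN G x * S.w x = ∫⁻ ω in B.cone x, G (ω, S.level x) ∂B.ν :=
    fun x => by
      rw [liftStarNN, B.nu_cone_eq_w, mul_comm, ← mul_assoc,
        ENNReal.mul_inv_cancel (S.w_ne_zero hq x) (S.w_ne_top hq x), one_mul]
  rw [tsum_congr hcone, S.tsum_eq_tsum_level, B.lintegral_pm hq]
  refine tsum_congr fun n => ?_
  rw [B.lintegral_eq_tsum_setLIntegral_cone n]
  exact tsum_congr fun x => by rw [x.2]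

theorem lintegral_liftNN (hq : q ≠ 0) (φ : S.V → ℝ≥0∞) :
    ∫⁻ p, B.liftNN φ p ∂B.pm = ∑' x, φ x * S.w x := by
  rw [← B.tsum_liftStarNN_mul_w hq, B.liftStarNN_liftNN hq]

theorem eLpNorm_lift (hq : q ≠ 0) {p : ℝ≥0∞} (hp : p ≠ 0) (f : S.V → ℂ) :
    eLpNorm (B.lift f) p B.pm = S.lpNorm p f := by
  rcases eq_or_ne p ∞ with rfl | hptop
  · rw [eLpNorm_exponent_top, eLpNormEssSup, FlowTree.lpNorm, if_pos rfl]
    refine le_antisymm (essSup_le_of_ae_le _ (ae_of_all _ fun p =>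
      le_iSup (fun x => (‖f x‖₊ : ℝ≥0∞)) (B.vert p.1 p.2))) (iSup_le fun x => ?_)
    have := B.liftStarNN_le_essSup hq (B.liftNN fun y => ‖f y‖ₑ) x
    rwa [B.liftStarNN_liftNN hq] at this
  · rw [eLpNorm_eq_lintegral_rpow_enorm_toReal hp hptop, FlowTree.lpNorm, if_neg hptop]
    exact congrArg (· ^ _) (B.lintegral_liftNN hq fun x => ‖f x‖ₑ ^ p.toReal)

theorem lpNorm_liftStar_le (hq : q ≠ 0) {p : ℝ≥0∞} (hp : 1 ≤ p) (g : B.Ω × ℤ → ℂ) :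
    S.lpNorm p (B.liftStar g) ≤ eLpNorm g p B.pm := by
  rcases eq_or_ne p ∞ with rfl | hptop
  · rw [eLpNorm_exponent_top, eLpNormEssSup, FlowTree.lpNorm, if_pos rfl]
    exact iSup_le fun x => (B.enorm_liftStar_le g x).trans (B.liftStarNN_le_essSup hq _ x)
  have hr : 1 ≤ p.toReal := ENNReal.toReal_mono hptop hp
  rw [eLpNorm_eq_lintegral_rpow_enorm_toReal (by positivity) hptop, FlowTree.lpNorm,
    if_neg hptop, ← B.tsum_liftStarNN_mul_w hq]
  gcongr with x
  calc ‖B.liftStar g x‖ₑ ^ p.toReal ≤ B.liftStarNN (fun p => ‖g p‖ₑ) x ^ p.toReal := by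
        gcongr; exact B.enorm_liftStar_le g x
    _ ≤ _ := B.rpow_liftStarNN_le hq _ hr x

end FlowTreeBoundary

/-- transference of weak type `(1,1)` and strong `L^p` bounds between a linear
operator `A` on `ℂ^T` and its lifting `ΦAΦ*`, and from a linear operator `α` on
`ℂ^{Ω×ℤ}` to `Φ*αΦ`. -/
theorem lifting_transference {q : ℕ} (hq : 2 ≤ q) (S : FlowTree q) (B : FlowTreeBoundary S)
    (A : (S.V → ℂ) →ₗ[ℂ] (S.V → ℂ)) (alpha : (B.Ω × ℤ → ℂ) →ₗ[ℂ] (B.Ω × ℤ → ℂ)) :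
    (∀ C : ℝ≥0∞,
      (∀ f : S.V → ℂ, S.wkNorm (A f) ≤ C * S.lpNorm 1 f) ↔
      (∀ g : B.Ω × ℤ → ℂ, wkMeas B.pm (B.lift (A (B.liftStar g))) ≤
        C * MeasureTheory.eLpNorm g 1 B.pm)) ∧
    (∀ p : ℝ≥0∞, 1 ≤ p → ∀ C : ℝ≥0∞,
      (∀ f : S.V → ℂ, S.lpNorm p (A f) ≤ C * S.lpNorm p f) ↔
      (∀ g : B.Ω × ℤ → ℂ, MeasureTheory.eLpNorm (B.lift (A (B.liftStar g))) p B.pm ≤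
        C * MeasureTheory.eLpNorm g p B.pm)) ∧
    (∀ p : ℝ≥0∞, 1 ≤ p → ∀ C : ℝ≥0∞,
      (∀ g : B.Ω × ℤ → ℂ, MeasureTheory.eLpNorm (alpha g) p B.pm ≤
        C * MeasureTheory.eLpNorm g p B.pm) →
      ∀ f : S.V → ℂ, S.lpNorm p (B.liftStar (alpha (B.lift f))) ≤ C * S.lpNorm p f) := by
  have hq0 : q ≠ 0 := by omega
  have hp0 : ∀ p : ℝ≥0∞, 1 ≤ p → p ≠ 0 := fun p hp => (zero_lt_one.trans_le hp).ne'
  refine ⟨fun C => ⟨fun hA g => ?_, fun hα f => ?_⟩,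
    fun p hp C => ⟨fun hA g => ?_, fun hα f => ?_⟩, fun p hp C hα f => ?_⟩
  · rw [B.wkMeas_lift hq0]
    exact (hA _).trans (by gcongr; exact B.lpNorm_liftStar_le hq0 le_rfl g)
  · have := hα (B.lift f)
    rwa [B.wkMeas_lift hq0, B.liftStar_lift hq0, B.eLpNorm_lift hq0 one_ne_zero] at this
  · rw [B.eLpNorm_lift hq0 (hp0 p hp)]
    exact (hA _).trans (by gcongr; exact B.lpNorm_liftStar_le hq0 hp g)
  · have := hα (B.lift f)
    rwa [B.eLpNorm_lift hq0 (hp0 p hp), B.liftStar_lift hq0, B.eLpNorm_lift hq0 (hp0 p hp)] at this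
  · calc S.lpNorm p (B.liftStar (alpha (B.lift f))) ≤ eLpNorm (alpha (B.lift f)) p B.pm :=
          B.lpNorm_liftStar_le hq0 hp _
      _ ≤ C * eLpNorm (B.lift f) p B.pm := hα _
      _ = C * S.lpNorm p f := by rw [B.eLpNorm_lift hq0 (hp0 p hp)]
end

section
/- Let G : ℕ → ℝ and let 𝒦 be the integral operator 𝒦f(x) = Σ_{y∈T} q^{−ℓ(x)/2} G(d(x,y)) q^{−ℓ(y)/2} f(y) μ(y), defined for finitely supported f : T → ℂ. Then for every finitely supported f and every x ∈ T, (∇𝒦 − 𝒦∇*)f(x) = Σ_{n∈ℤ} h(n) Σ̃_{−n} f(x), where h(0) = 0 and h(n) = sgn(n) · q^{(|n|−1)/2} · (G(|n|−1) − G(|n|+1)) for n ≠ 0 (all sums involved have finitely many nonzero terms). -/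
open MeasureTheory ENNReal Set Function
open scoped NNReal ENNReal Classical

section AuxSkew
namespace FlowTree
variable {q : ℕ} (S : FlowTree q)

lemma level_iter (k : ℕ) (x : S.V) : S.level (S.pred^[k] x) = S.level x + k := by
  induction k generalizing x with
  | zero => simp
  | succ k ih =>
    rw [Function.iterate_succ_apply', S.level_pred, ih]
    push_cast; ring

lemma iter_inj {n m : ℕ} {x y : S.V} (h : S.pred^[n] x = S.pred^[m] y) :
    S.level x + (n : ℤ) = S.level y + (m : ℤ) := by
  have := congrArg S.level h
  rwa [S.level_iter, S.level_iter] at this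

lemma dist_pred_iter (k : ℕ) (x : S.V) : S.dist x (S.pred^[k] x) = k := by
  have h1 : S.dist x (S.pred^[k] x) ≤ k + 0 := S.dist_le _ _ k 0 (by simp)
  obtain ⟨n, m, he, hd⟩ := S.dist_spec x (S.pred^[k] x)
  have he' : S.pred^[n] x = S.pred^[m + k] x := by
    rw [he, ← Function.iterate_add_apply]
  have h2 := S.iter_inj he'
  omega

lemma min_pair {x y : S.V} {n m n' m' : ℕ} (h : S.pred^[n] x = S.pred^[m] y)
    (hd : n + m = S.dist x y) (h' : S.pred^[n'] x = S.pred^[m'] y) : n ≤ n' ∧ m ≤ m' := by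
  have e1 := S.iter_inj h
  have e2 := S.iter_inj h'
  have e3 := S.dist_le x y n' m' h'
  omega

lemma dist_x_pred_y_pos {x y : S.V} {n m : ℕ} (h : S.pred^[n] x = S.pred^[m] y)
    (hd : n + m = S.dist x y) (hm : 1 ≤ m) : S.dist x (S.pred y) = n + m - 1 := by
  have hub : S.dist x (S.pred y) ≤ n + (m - 1) := by
    apply S.dist_le
    rw [h]
    conv_lhs => rw [show m = (m-1)+1 by omega, Function.iterate_succ_apply]
  have hone : S.dist (S.pred y) y = 1 := by
    rw [S.dist_comm]
    have := S.dist_pred_iter 1 y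
    simpa using this
  have htr := S.dist_triangle x (S.pred y) y
  omega

lemma dist_x_pred_y_anc {x y : S.V} {n : ℕ} (h : S.pred^[n] x = y) :
    S.dist x (S.pred y) = n + 1 := by
  have hub : S.dist x (S.pred y) ≤ (n+1) + 0 := by
    apply S.dist_le
    rw [Function.iterate_succ_apply', h]
    simp
  obtain ⟨a, b, he, hd⟩ := S.dist_spec x (S.pred y)
  have he' : S.pred^[a] x = S.pred^[(b+1)+n] x := by
    rw [he, Function.iterate_add_apply, Function.iterate_succ_apply, h]
  have h2 := S.iter_inj he'
  omega

lemma desc_finite (b : ℕ) (x : S.V) : {y | S.pred^[b] y = x}.Finite := by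
  induction b generalizing x with
  | zero =>
    have : {y | S.pred^[0] y = x} = {x} := by ext y; simp [eq_comm]
    rw [this]; exact Set.finite_singleton x
  | succ b ih =>
    have hsub : {y | S.pred^[b+1] y = x} ⊆ ⋃ z ∈ {z | S.pred z = x}, {y | S.pred^[b] y = z} := by
      intro y hy
      simp only [Set.mem_setOf_eq, Set.mem_iUnion]
      exact ⟨S.pred^[b] y, by rw [← Function.iterate_succ_apply' S.pred b y]; exact hy, rfl⟩
    exact Set.Finite.subset ((S.succ_finite x).biUnion (fun z _ => ih z)) hsub

lemma tsum_set {s : Set S.V} (hs : s.Finite) (f : S.V → ℂ) :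
    ∑' y : s, f y.1 = ∑ y ∈ hs.toFinset, f y := by
  classical
  rw [tsum_subtype]
  rw [tsum_eq_sum (s := hs.toFinset) (fun y hy => Set.indicator_of_notMem (by simpa using hy) f)]
  exact Finset.sum_congr rfl fun y hy => Set.indicator_of_mem (by simpa using hy) f


lemma sig_iter (k : ℕ) (f : S.V → ℂ) (x : S.V) : (S.sig)^[k] f x = f (S.pred^[k] x) := by
  induction k generalizing f with
  | zero => rfl
  | succ k ih =>
    rw [Function.iterate_succ_apply, ih, Function.iterate_succ_apply' S.pred k x]
    rfl

lemma sigStar_iter (b : ℕ) (f : S.V → ℂ) (x : S.V) :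
    (S.sigStar)^[b] f x = (((q : ℂ) ^ b)⁻¹) * ∑ y ∈ (S.desc_finite b x).toFinset, f y := by
  classical
  induction b generalizing x with
  | zero =>
    have h0 : (S.desc_finite 0 x).toFinset = {x} := by
      ext y; simp [eq_comm]
    simp [h0]
  | succ b ih =>
    rw [Function.iterate_succ_apply']
    show (q : ℂ)⁻¹ * (∑' y : {y | S.pred y = x}, ((S.sigStar)^[b] f) y.1) = _
    rw [S.tsum_set (S.succ_finite x)]
    have hsum : ∀ z ∈ (S.succ_finite x).toFinset, ((S.sigStar)^[b] f) z
        = ((q : ℂ) ^ b)⁻¹ * ∑ y ∈ ((S.desc_finite (b+1) x).toFinset.filter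
            (fun y => S.pred^[b] y = z)), f y := by
      intro z hz
      rw [ih]
      congr 1
      apply Finset.sum_congr _ (fun _ _ => rfl)
      ext y
      simp only [Set.Finite.mem_toFinset, Set.mem_setOf_eq, Finset.mem_filter]
      constructor
      · intro hy
        refine ⟨?_, hy⟩
        rw [Function.iterate_succ_apply' S.pred b y, hy]
        simpa using hz
      · intro hy; exact hy.2
    rw [Finset.sum_congr rfl hsum, ← Finset.mul_sum,
      Finset.sum_fiberwise_of_maps_to (g := S.pred^[b]) ?_ f]
    · rw [← mul_assoc, pow_succ, mul_inv, mul_comm ((q:ℂ)^b)⁻¹]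
    · intro y hy
      simp only [Set.Finite.mem_toFinset, Set.mem_setOf_eq] at hy ⊢
      rw [← Function.iterate_succ_apply' S.pred b y]
      exact hy

end FlowTree

-- real prefactor lemmas
lemma skew_pref1 {Q : ℝ} (hQ : 0 < Q) (a b : ℤ) :
    Q⁻¹ * (Q ^ (-(a : ℝ)/2) * Q ^ (-((b+1 : ℤ) : ℝ)/2)) * Q ^ ((b+1 : ℤ))
      = Q ^ (((b : ℝ) - (a : ℝ) - 1)/2) := by
  rw [← Real.rpow_intCast Q (b+1), ← Real.rpow_neg_one Q,
    ← Real.rpow_add hQ, ← Real.rpow_add hQ, ← Real.rpow_add hQ]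
  congr 1
  push_cast
  ring

lemma skew_pref2 {Q : ℝ} (hQ : 0 < Q) (a b : ℤ) :
    Q ^ (-((a+1 : ℤ) : ℝ)/2) * Q ^ (-(b : ℝ)/2) * Q ^ ((b : ℤ))
      = Q ^ (((b : ℝ) - (a : ℝ) - 1)/2) := by
  rw [← Real.rpow_intCast Q b, ← Real.rpow_add hQ, ← Real.rpow_add hQ]
  congr 1
  push_cast
  ring

lemma skew_caseEq {Q : ℝ} (hQ : 0 < Q) (g1 g2 : ℝ) (hg : g1 = g2) (a b : ℤ) :
    Q⁻¹ * (Q ^ (-(a : ℝ)/2) * Q ^ (-((b+1 : ℤ) : ℝ)/2) * g1) * Q ^ ((b+1 : ℤ))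
      - Q ^ (-((a+1 : ℤ) : ℝ)/2) * Q ^ (-(b : ℝ)/2) * g2 * Q ^ ((b : ℤ)) = 0 := by
  subst hg
  linear_combination g1 * skew_pref1 hQ a b - g1 * skew_pref2 hQ a b

lemma skew_caseDesc {Q : ℝ} (hQ : 0 < Q) (g1 g2 : ℝ) (a b : ℤ) (m : ℕ) (hab : a = b + m) :
    Q⁻¹ * (Q ^ (-(a : ℝ)/2) * Q ^ (-((b+1 : ℤ) : ℝ)/2) * g1) * Q ^ ((b+1 : ℤ))
      - Q ^ (-((a+1 : ℤ) : ℝ)/2) * Q ^ (-(b : ℝ)/2) * g2 * Q ^ ((b : ℤ))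
    = (1 * Q ^ (((m : ℝ) - 1)/2) * (g1 - g2)) * (Q ^ m)⁻¹ := by
  have e1 := skew_pref1 hQ a b
  have e2 := skew_pref2 hQ a b
  have e3 : (Q ^ m)⁻¹ = Q ^ (-(m : ℝ)) := by
    rw [← Real.rpow_natCast Q m, ← Real.rpow_neg hQ.le]
  have e5 : Q ^ (((m : ℝ) - 1)/2) * (Q ^ m)⁻¹ = Q ^ (((b : ℝ) - (a : ℝ) - 1)/2) := by
    rw [e3, ← Real.rpow_add hQ]
    congr 1
    have : (a : ℝ) = (b : ℝ) + (m : ℝ) := by exact_mod_cast congrArg (Int.cast : ℤ → ℝ) hab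
    rw [this]; ring
  linear_combination g1 * e1 - g2 * e2 - (g1 - g2) * e5

lemma skew_caseAnc {Q : ℝ} (hQ : 0 < Q) (g1 g2 : ℝ) (a b : ℤ) (n : ℕ) (hab : b = a + n) :
    Q⁻¹ * (Q ^ (-(a : ℝ)/2) * Q ^ (-((b+1 : ℤ) : ℝ)/2) * g1) * Q ^ ((b+1 : ℤ))
      - Q ^ (-((a+1 : ℤ) : ℝ)/2) * Q ^ (-(b : ℝ)/2) * g2 * Q ^ ((b : ℤ))
    = -1 * Q ^ (((n : ℝ) - 1)/2) * (g2 - g1) := by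
  have e1 := skew_pref1 hQ a b
  have e2 := skew_pref2 hQ a b
  have e5 : Q ^ (((b : ℝ) - (a : ℝ) - 1)/2) = Q ^ (((n : ℝ) - 1)/2) := by
    congr 1
    have : (b : ℝ) = (a : ℝ) + (n : ℝ) := by exact_mod_cast congrArg (Int.cast : ℤ → ℝ) hab
    rw [this]; ring
  linear_combination g1 * e1 - g2 * e2 + (g1 - g2) * e5

/-- coefficient of the theorem -/
noncomputable def coefK (q : ℕ) (G : ℕ → ℝ) (n : ℤ) : ℂ :=
  if n = 0 then (0 : ℂ) else
    (((if 0 < n then (1 : ℝ) else -1) * (q : ℝ) ^ (((n.natAbs : ℝ) - 1)/2) *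
      (G (n.natAbs - 1) - G (n.natAbs + 1)) : ℝ) : ℂ)

end AuxSkew

/-- the skew-symmetric part of `𝒮 = ∇𝒦`, for `𝒦` the integral operator with
kernel `q^{−ℓ(x)/2} G(d(x,y)) q^{−ℓ(y)/2}`, equals `Σ_{n∈ℤ} h(n) Σ̃_{−n}`, where `h(0) = 0`
and `h(n) = sgn(n) q^{(|n|−1)/2} (G(|n|−1) − G(|n|+1))` for `n ≠ 0`. -/
theorem skew_symmetric_part_formula {q : ℕ} (hq : 2 ≤ q) (S : FlowTree q) (G : ℕ → ℝ)
    (f : S.V → ℂ) (hf : (Function.support f).Finite) (x : S.V) :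
    S.grad (S.kernelOp (fun n => (G n : ℂ)) f) x
        - S.kernelOp (fun n => (G n : ℂ)) (S.gradStar f) x
      = ∑' n : ℤ, (if n = 0 then (0 : ℂ) else
          (((if 0 < n then (1 : ℝ) else -1) * (q : ℝ) ^ (((n.natAbs : ℝ) - 1)/2) *
            (G (n.natAbs - 1) - G (n.natAbs + 1)) : ℝ) : ℂ)) * S.sigTilde (-n) f x := by
  classical
  have hqpos : 0 < q := by omega
  have hQ : 0 < (q : ℝ) := by exact_mod_cast hqpos
  set Gc : ℕ → ℂ := fun n => (G n : ℂ) with hGc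
  set C : S.V → S.V → ℂ := fun u v =>
    (((q : ℝ) ^ (-((S.level u : ℤ) : ℝ)/2) * (q : ℝ) ^ (-((S.level v : ℤ) : ℝ)/2) : ℝ) : ℂ)
      * Gc (S.dist u v) with hC
  set sf : Finset S.V := hf.toFinset with hsfdef
  have hmemsf : ∀ y, y ∈ sf ↔ f y ≠ 0 := fun y => by
    simp [hsfdef, Set.Finite.mem_toFinset, Function.mem_support]
  set Fb : Finset S.V := sf ∪ sf.image S.pred with hFbdef
  have hsfFb : sf ⊆ Fb := Finset.subset_union_left
  have hmaps : ∀ z ∈ sf, S.pred z ∈ Fb := fun z hz =>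
    Finset.mem_union_right _ (Finset.mem_image_of_mem _ hz)
  have hfF : ∀ y, y ∉ Fb → f y = 0 := by
    intro y hy
    by_contra h
    exact hy (hsfFb ((hmemsf y).2 h))
  have hker : ∀ (g : S.V → ℂ), (∀ y, y ∉ Fb → g y = 0) → ∀ u : S.V,
      S.kernelOp Gc g u = ∑ y ∈ Fb, C u y * g y * ((S.wR y : ℝ) : ℂ) := by
    intro g hg u
    simp only [FlowTree.kernelOp]
    exact tsum_eq_sum (s := Fb) (fun y hy => by rw [hg y hy]; simp)
  have hsigStar_sum : ∀ u : S.V, S.sigStar f u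
      = (q : ℂ)⁻¹ * ∑ z ∈ sf.filter (fun z => S.pred z = u), f z := by
    intro u
    simp only [FlowTree.sigStar]
    rw [S.tsum_set (S.succ_finite u)]
    congr 1
    rw [← Finset.sum_filter_ne_zero ((S.succ_finite u).toFinset),
        ← Finset.sum_filter_ne_zero (sf.filter _)]
    apply Finset.sum_congr _ (fun _ _ => rfl)
    ext z
    simp only [Finset.mem_filter, Set.Finite.mem_toFinset, Set.mem_setOf_eq, hmemsf]
    tauto
  have hgsF : ∀ y, y ∉ Fb → S.gradStar f y = 0 := by
    intro y hy
    simp only [FlowTree.gradStar]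
    rw [hfF y hy, hsigStar_sum y]
    have hempty : sf.filter (fun z => S.pred z = y) = ∅ := by
      rw [Finset.filter_eq_empty_iff]
      intro z hz hpz
      exact hy (hpz ▸ hmaps z hz)
    rw [hempty]
    simp
  have key1 : ∑ y ∈ Fb, C x y * S.sigStar f y * ((S.wR y : ℝ) : ℂ)
      = ∑ z ∈ sf, (q : ℂ)⁻¹ * C x (S.pred z) * f z * ((S.wR (S.pred z) : ℝ) : ℂ) := by
    rw [← Finset.sum_fiberwise_of_maps_to (g := S.pred) hmaps
        (fun z => (q : ℂ)⁻¹ * C x (S.pred z) * f z * ((S.wR (S.pred z) : ℝ) : ℂ))]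
    refine Finset.sum_congr rfl ?_
    intro u hu
    rw [hsigStar_sum u]
    simp only [Finset.mul_sum, Finset.sum_mul]
    refine Finset.sum_congr rfl ?_
    intro z hz
    rw [Finset.mem_filter] at hz
    rw [hz.2]
    ring
  have hLHS : S.grad (S.kernelOp Gc f) x - S.kernelOp Gc (S.gradStar f) x
      = ∑ y ∈ sf, ((q : ℂ)⁻¹ * C x (S.pred y) * ((S.wR (S.pred y) : ℝ) : ℂ)
          - C (S.pred x) y * ((S.wR y : ℝ) : ℂ)) * f y := by
    simp only [FlowTree.grad]
    rw [hker f hfF x, hker f hfF (S.pred x), hker _ hgsF x]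
    have hsplit : ∑ y ∈ Fb, C x y * S.gradStar f y * ((S.wR y : ℝ) : ℂ)
        = ∑ y ∈ Fb, C x y * f y * ((S.wR y : ℝ) : ℂ)
          - ∑ y ∈ Fb, C x y * S.sigStar f y * ((S.wR y : ℝ) : ℂ) := by
      rw [← Finset.sum_sub_distrib]
      exact Finset.sum_congr rfl fun y _ => by simp only [FlowTree.gradStar]; ring
    rw [hsplit, key1]
    have hshrink : ∑ y ∈ Fb, C (S.pred x) y * f y * ((S.wR y : ℝ) : ℂ)
        = ∑ y ∈ sf, C (S.pred x) y * f y * ((S.wR y : ℝ) : ℂ) :=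
      (Finset.sum_subset hsfFb (fun y _ hy => by
        rw [(by by_contra h; exact hy ((hmemsf y).2 h) : f y = 0)]; ring)).symm
    rw [hshrink]
    have hcomb : ∑ z ∈ sf, (q : ℂ)⁻¹ * C x (S.pred z) * f z * ((S.wR (S.pred z) : ℝ) : ℂ)
        - ∑ y ∈ sf, C (S.pred x) y * f y * ((S.wR y : ℝ) : ℂ)
        = ∑ y ∈ sf, ((q : ℂ)⁻¹ * C x (S.pred y) * ((S.wR (S.pred y) : ℝ) : ℂ)
            - C (S.pred x) y * ((S.wR y : ℝ) : ℂ)) * f y := by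
      rw [← Finset.sum_sub_distrib]
      exact Finset.sum_congr rfl fun y _ => by ring
    rw [← hcomb]
    ring
  set D : ℕ := sf.sup (S.dist x) with hDdef
  have hDle : ∀ y ∈ sf, S.dist x y ≤ D := fun y hy => Finset.le_sup hy
  set I : Finset ℤ := Finset.Icc (-(D : ℤ)) (D : ℤ) with hIdef
  have hanc : ∀ n : ℤ, n < 0 → S.sigTilde (-n) f x = f (S.pred^[(-n).toNat] x) := by
    intro n hn
    simp only [FlowTree.sigTilde]
    rw [if_pos (by omega : (0:ℤ) ≤ -n), S.sig_iter]
  have hdesc : ∀ n : ℤ, 0 < n → S.sigTilde (-n) f x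
      = ((q : ℂ) ^ n.toNat)⁻¹ * ∑ y ∈ (S.desc_finite n.toNat x).toFinset, f y := by
    intro n hn
    simp only [FlowTree.sigTilde]
    rw [if_neg (by omega : ¬ (0:ℤ) ≤ -n), neg_neg, S.sigStar_iter]
  have hfold : (∑' n : ℤ, (if n = 0 then (0 : ℂ) else
          (((if 0 < n then (1 : ℝ) else -1) * (q : ℝ) ^ (((n.natAbs : ℝ) - 1)/2) *
            (G (n.natAbs - 1) - G (n.natAbs + 1)) : ℝ) : ℂ)) * S.sigTilde (-n) f x)
      = ∑' n : ℤ, coefK q G n * S.sigTilde (-n) f x := rfl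
  have hvan : ∀ n : ℤ, n ∉ I → coefK q G n * S.sigTilde (-n) f x = 0 := by
    intro n hn
    rw [hIdef, Finset.mem_Icc] at hn
    push_neg at hn
    by_cases h0 : n < 0
    · rw [hanc n h0]
      have hf0 : f (S.pred^[(-n).toNat] x) = 0 := by
        by_contra hne
        have hmem := (hmemsf _).2 hne
        have hle := hDle _ hmem
        rw [S.dist_pred_iter] at hle
        omega
      rw [hf0, mul_zero]
    · have h1 : 0 < n := by omega
      rw [hdesc n h1]
      have hsum0 : ∑ y ∈ (S.desc_finite n.toNat x).toFinset, f y = 0 := by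
        apply Finset.sum_eq_zero
        intro y hy
        rw [Set.Finite.mem_toFinset] at hy
        by_contra hne
        have hmem := (hmemsf _).2 hne
        have hle := hDle _ hmem
        have hdxy : S.dist x y = n.toNat := by
          rw [S.dist_comm, ← hy]
          exact S.dist_pred_iter n.toNat y
        omega
      rw [hsum0, mul_zero, mul_zero]
  set κ : ℤ → S.V → ℂ := fun n y =>
    if n = 0 then 0
    else if n < 0 then (if y = S.pred^[(-n).toNat] x then coefK q G n else 0)
    else (if S.pred^[n.toNat] y = x then coefK q G n * ((q : ℂ) ^ n.toNat)⁻¹ else 0) with hκdef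
  have hterm : ∀ n ∈ I, coefK q G n * S.sigTilde (-n) f x = ∑ y ∈ sf, κ n y * f y := by
    intro n _
    by_cases h0 : n = 0
    · simp [hκdef, h0, coefK]
    by_cases hneg : n < 0
    · rw [hanc n hneg]
      have hcongr : ∀ y ∈ sf, κ n y * f y
          = (if y = S.pred^[(-n).toNat] x then coefK q G n * f y else 0) := by
        intro y hy
        simp only [hκdef, if_neg h0, if_pos hneg]
        split
        · rfl
        · rw [zero_mul]
      rw [Finset.sum_congr rfl hcongr, Finset.sum_ite_eq']
      split
      · rfl
      · next hnot =>
          rw [show f (S.pred^[(-n).toNat] x) = 0 from by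
            by_contra hne; exact hnot ((hmemsf _).2 hne), mul_zero]
    · have hpos : 0 < n := by omega
      rw [hdesc n hpos]
      have hfilter : (S.desc_finite n.toNat x).toFinset.filter (fun y => f y ≠ 0)
          = sf.filter (fun y => S.pred^[n.toNat] y = x) := by
        ext y
        simp only [Finset.mem_filter, Set.Finite.mem_toFinset, Set.mem_setOf_eq, hmemsf]
        tauto
      have hstep : coefK q G n * (((q : ℂ) ^ n.toNat)⁻¹
            * ∑ y ∈ (S.desc_finite n.toNat x).toFinset, f y)
          = coefK q G n * ((q : ℂ) ^ n.toNat)⁻¹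
            * ∑ y ∈ sf.filter (fun y => S.pred^[n.toNat] y = x), f y := by
        rw [← Finset.sum_filter_ne_zero ((S.desc_finite n.toNat x).toFinset), hfilter]
        ring
      rw [hstep, Finset.mul_sum, Finset.sum_filter]
      refine Finset.sum_congr rfl ?_
      intro y hy
      simp only [hκdef, if_neg h0, if_neg hneg]
      by_cases hc : S.pred^[n.toNat] y = x
      · rw [if_pos hc, if_pos hc]
      · rw [if_neg hc, if_neg hc, zero_mul]
  have hRHS : (∑' n : ℤ, coefK q G n * S.sigTilde (-n) f x)
      = ∑ y ∈ sf, (∑ n ∈ I, κ n y) * f y := by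
    rw [tsum_eq_sum hvan, Finset.sum_congr rfl hterm, Finset.sum_comm]
    exact Finset.sum_congr rfl fun y _ => (Finset.sum_mul _ _ _).symm
  rw [hfold, hRHS, hLHS]
  refine Finset.sum_congr rfl ?_
  intro y hy
  congr 1
  obtain ⟨n₀, m₀, he, hd⟩ := S.dist_spec x y
  have hdD : S.dist x y ≤ D := hDle y hy
  have hlev := S.iter_inj he
  rcases Nat.eq_zero_or_pos n₀ with hn0 | hn0 <;> rcases Nat.eq_zero_or_pos m₀ with hm0 | hm0
  · -- x = y
    subst hn0; subst hm0
    simp only [Function.iterate_zero_apply] at he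
    subst he
    have hd1 : S.dist x (S.pred x) = 1 := by
      simpa using S.dist_x_pred_y_anc (x := x) (y := x) (n := 0) (by simp)
    have hd2 : S.dist (S.pred x) x = 1 := by rw [S.dist_comm]; exact hd1
    have hsum0 : ∑ n ∈ I, κ n x = 0 := by
      apply Finset.sum_eq_zero
      intro n _
      simp only [hκdef]
      by_cases h0 : n = 0
      · rw [if_pos h0]
      rw [if_neg h0]
      by_cases hneg : n < 0
      · rw [if_pos hneg, if_neg]
        intro hcond
        have := S.iter_inj (x := x) (y := x) (n := (-n).toNat) (m := 0) (by simpa using hcond.symm)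
        omega
      · rw [if_neg hneg, if_neg]
        intro hcond
        have := S.iter_inj (x := x) (y := x) (n := 0) (m := n.toNat) (by simpa using hcond.symm)
        omega
    rw [hsum0]
    simp only [hC, hGc, FlowTree.wR, S.level_pred, hd1, hd2]
    have hcast := congrArg (fun r : ℝ => (r : ℂ)) (skew_caseEq hQ (G 1) (G 1) rfl (S.level x) (S.level x))
    push_cast at hcast ⊢
    linear_combination hcast
  · -- x = pred^[m₀] y : y is a descendant
    simp only [hn0, Function.iterate_zero_apply] at he hd
    -- he : x = pred^[m₀] y
    have hd1 : S.dist x (S.pred y) = m₀ - 1 := by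
      simpa using S.dist_x_pred_y_pos (n := 0) (m := m₀) (by simpa using he) (by simpa using hd) hm0
    have hd2 : S.dist (S.pred x) y = m₀ + 1 := by
      rw [S.dist_comm]
      exact S.dist_x_pred_y_anc (x := y) (y := x) (n := m₀) he.symm
    have hmI : (m₀ : ℤ) ∈ I := by
      rw [hIdef, Finset.mem_Icc]
      constructor <;> omega
    have hsum1 : ∑ n ∈ I, κ n y = coefK q G m₀ * ((q : ℂ) ^ m₀)⁻¹ := by
      rw [Finset.sum_eq_single_of_mem (m₀ : ℤ) hmI ?_]
      · simp only [hκdef]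
        rw [if_neg (by omega : ¬ (m₀ : ℤ) = 0), if_neg (by omega : ¬ (m₀ : ℤ) < 0),
          if_pos]
        · norm_num
        · have : ((m₀ : ℤ)).toNat = m₀ := by omega
          rw [this]
          exact he.symm
      · intro b _ hb
        simp only [hκdef]
        by_cases h0 : b = 0
        · rw [if_pos h0]
        rw [if_neg h0]
        by_cases hneg : b < 0
        · rw [if_pos hneg, if_neg]
          intro hcond
          have h' : S.pred^[(-b).toNat] x = S.pred^[0] y := by simpa using hcond.symm
          have he0 : S.pred^[0] x = S.pred^[m₀] y := by simpa using he
          have hd0 : 0 + m₀ = S.dist x y := by omega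
          have := (S.min_pair he0 hd0 h').2
          omega
        · rw [if_neg hneg, if_neg]
          intro hcond
          have h2 := S.iter_inj (by rw [hcond, he] :
            S.pred^[b.toNat] y = S.pred^[m₀] y)
          omega
    rw [hsum1]
    have hco : coefK q G (m₀ : ℤ) = (((1 : ℝ) * (q : ℝ) ^ (((m₀ : ℝ) - 1)/2) *
        (G (m₀ - 1) - G (m₀ + 1)) : ℝ) : ℂ) := by
      rw [coefK, if_neg (by omega : ¬ (m₀ : ℤ) = 0), if_pos (by omega : (0:ℤ) < (m₀ : ℤ))]
      norm_num
    rw [hco]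
    simp only [hC, hGc, FlowTree.wR, S.level_pred, hd1, hd2]
    have hab : S.level x = S.level y + m₀ := by omega
    have hcast := congrArg (fun r : ℝ => (r : ℂ))
      (skew_caseDesc hQ (G (m₀ - 1)) (G (m₀ + 1)) (S.level x) (S.level y) m₀ hab)
    push_cast at hcast ⊢
    linear_combination hcast
  · -- y = pred^[n₀] x : y is an ancestor
    simp only [hm0, Function.iterate_zero_apply] at he hd
    -- he : pred^[n₀] x = y
    have hd1 : S.dist x (S.pred y) = n₀ + 1 := S.dist_x_pred_y_anc he
    have hd2 : S.dist (S.pred x) y = n₀ - 1 := by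
      rw [S.dist_comm]
      simpa using S.dist_x_pred_y_pos (x := y) (y := x) (n := 0) (m := n₀)
        (by simpa using he.symm) (by rw [S.dist_comm]; simpa using hd) hn0
    have hmI : (-(n₀ : ℤ)) ∈ I := by
      rw [hIdef, Finset.mem_Icc]
      constructor <;> omega
    have hsum1 : ∑ n ∈ I, κ n y = coefK q G (-(n₀ : ℤ)) := by
      rw [Finset.sum_eq_single_of_mem (-(n₀ : ℤ)) hmI ?_]
      · simp only [hκdef]
        rw [if_neg (by omega : ¬ (-(n₀ : ℤ)) = 0), if_pos (by omega : (-(n₀ : ℤ)) < 0),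
          if_pos]
        have : ((-(-(n₀ : ℤ))).toNat) = n₀ := by omega
        rw [this]
        exact he.symm
      · intro b _ hb
        simp only [hκdef]
        by_cases h0 : b = 0
        · rw [if_pos h0]
        rw [if_neg h0]
        by_cases hneg : b < 0
        · rw [if_pos hneg, if_neg]
          intro hcond
          have h2 := S.iter_inj (by rw [← hcond, he] :
            S.pred^[(-b).toNat] x = S.pred^[n₀] x)
          omega
        · rw [if_neg hneg, if_neg]
          intro hcond
          rw [← he, ← Function.iterate_add_apply] at hcond
          have h2 := S.iter_inj (x := x) (y := x) (m := 0) (by simpa using hcond)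
          omega
    rw [hsum1]
    have hco : coefK q G (-(n₀ : ℤ)) = (((-1 : ℝ) * (q : ℝ) ^ (((n₀ : ℝ) - 1)/2) *
        (G (n₀ - 1) - G (n₀ + 1)) : ℝ) : ℂ) := by
      rw [coefK, if_neg (by omega : ¬ (-(n₀ : ℤ)) = 0)]
      rw [if_neg (by omega : ¬ (0:ℤ) < (-(n₀ : ℤ)))]
      simp
    rw [hco]
    simp only [hC, hGc, FlowTree.wR, S.level_pred, hd1, hd2]
    have hab : S.level y = S.level x + n₀ := by omega
    have hcast := congrArg (fun r : ℝ => (r : ℂ))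
      (skew_caseAnc hQ (G (n₀ + 1)) (G (n₀ - 1)) (S.level x) (S.level y) n₀ hab)
    push_cast at hcast ⊢
    linear_combination hcast
  · -- incomparable-ish : both positive
    have hd1 : S.dist x (S.pred y) = n₀ + m₀ - 1 := S.dist_x_pred_y_pos he hd hm0
    have hd2 : S.dist (S.pred x) y = m₀ + n₀ - 1 := by
      rw [S.dist_comm]
      exact S.dist_x_pred_y_pos (x := y) (y := x) he.symm (by rw [S.dist_comm]; omega) hn0
    have hsum0 : ∑ n ∈ I, κ n y = 0 := by
      apply Finset.sum_eq_zero
      intro n _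
      simp only [hκdef]
      by_cases h0 : n = 0
      · rw [if_pos h0]
      rw [if_neg h0]
      by_cases hneg : n < 0
      · rw [if_pos hneg, if_neg]
        intro hcond
        have h' : S.pred^[(-n).toNat] x = S.pred^[0] y := by simpa using hcond.symm
        have := (S.min_pair he hd h').2
        omega
      · rw [if_neg hneg, if_neg]
        intro hcond
        have h' : S.pred^[0] x = S.pred^[n.toNat] y := by simpa using hcond.symm
        have := (S.min_pair he hd h').1
        omega
    rw [hsum0]
    simp only [hC, hGc, FlowTree.wR, S.level_pred, hd1, hd2]
    have hcast := congrArg (fun r : ℝ => (r : ℂ)) (skew_caseEq hQ (G (n₀ + m₀ - 1)) (G (m₀ + n₀ - 1))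
      (by rw [Nat.add_comm]) (S.level x) (S.level y))
    push_cast at hcast ⊢
    linear_combination hcast
end

section
/- Let x₁, x₂ ∈ T with x₁ ≠ x₂ and 𝔭(x₁) = 𝔭(x₂). Then all terms of the series Σ_{y ≤ x₁} q^{ℓ(y)/2} (G(d(x₁,y)) − G(d(x₂,y))) are nonnegative and the series diverges to +∞. (This is the computation showing that the Riesz transform 𝓡, whose kernel is built from G, does not map L^∞(μ) into BMO(μ): pairing 𝓡 of the bounded function χ_{{y : y ≤ x₁}} against the atom δ_{x₁} − δ_{x₂} gives an infinite value.) -/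
open MeasureTheory ENNReal Set Function
open scoped NNReal ENNReal Classical

section AuxProof
open ZRiesz

variable {q : ℕ}

lemma flowtree_level_iterate (S : FlowTree q) (y : S.V) (n : ℕ) :
    S.level (S.pred^[n] y) = S.level y + n := by
  induction n with
  | zero => simp
  | succ n ih =>
    rw [Function.iterate_succ_apply', S.level_pred, ih]
    push_cast; ring

lemma flowtree_dist_eq (S : FlowTree q) (x y : S.V) (n : ℕ)
    (h : S.pred^[n] y = x) : S.dist x y = n := by
  have hle : S.dist x y ≤ n := by
    have := S.dist_le x y 0 n (by simpa using h.symm)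
    simpa using this
  obtain ⟨a, b, hab, hsum⟩ := S.dist_spec x y
  have hlx : S.level x = S.level y + n := by
    rw [← h, flowtree_level_iterate]
  have hlev : S.level x + a = S.level y + b := by
    have h1 := flowtree_level_iterate S x a
    have h2 := flowtree_level_iterate S y b
    rw [hab] at h1
    omega
  omega

lemma flowtree_le'_of_iter (S : FlowTree q) (x y : S.V) (n : ℕ)
    (h : S.pred^[n] y = x) : S.le' y x := by
  have hd := flowtree_dist_eq S x y n h
  have hlx : S.level x = S.level y + n := by
    rw [← h, flowtree_level_iterate]
  unfold FlowTree.le'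
  omega

lemma flowtree_iter_of_le' (S : FlowTree q) (x y : S.V)
    (h : S.le' y x) : S.pred^[S.dist x y] y = x := by
  obtain ⟨a, b, hab, hsum⟩ := S.dist_spec x y
  have hlev : S.level x + a = S.level y + b := by
    have h1 := flowtree_level_iterate S x a
    have h2 := flowtree_level_iterate S y b
    rw [hab] at h1
    omega
  unfold FlowTree.le' at h
  have ha : a = 0 := by omega
  have hb : b = S.dist x y := by omega
  subst ha; subst hb
  simpa using hab.symm

lemma flowtree_dist_two (S : FlowTree q) (x₁ x₂ : S.V) (hne : x₁ ≠ x₂)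
    (hpp : S.pred x₁ = S.pred x₂) (y : S.V) (n : ℕ)
    (h : S.pred^[n] y = x₁) : S.dist x₂ y = n + 2 := by
  have hlx12 : S.level x₁ = S.level x₂ := by
    have h1 := S.level_pred x₁
    have h2 := S.level_pred x₂
    rw [hpp] at h1; omega
  have hup : S.dist x₂ y ≤ n + 2 := by
    have hiter : S.pred^[1] x₂ = S.pred^[n+1] y := by
      have h' : S.pred^[n+1] y = S.pred x₁ := by
        rw [Function.iterate_succ_apply', h]
      rw [h', hpp]
      simp
    have := S.dist_le x₂ y 1 (n+1) hiter
    omega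
  obtain ⟨a, b, hab, hsum⟩ := S.dist_spec x₂ y
  have hlx : S.level x₁ = S.level y + n := by
    rw [← h, flowtree_level_iterate]
  have hlev : S.level x₂ + a = S.level y + b := by
    have h1 := flowtree_level_iterate S x₂ a
    have h2 := flowtree_level_iterate S y b
    rw [hab] at h1
    omega
  have hbn : (b : ℤ) = a + n := by omega
  have ha1 : 1 ≤ a := by
    by_contra ha
    have ha0 : a = 0 := by omega
    subst ha0
    simp only [Function.iterate_zero_apply] at hab
    have hbn' : b = n := by omega
    subst hbn'
    exact hne (by rw [← h, ← hab])
  omega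

/-- Counting descendants: the set of `y` with `pred^[n] y = x` has `q^n` elements. -/
lemma flowtree_card_fiber (S : FlowTree q) (n : ℕ) (x : S.V) :
    ∃ _ : Finite {y : S.V // S.pred^[n] y = x},
      Nat.card {y : S.V // S.pred^[n] y = x} = q ^ n := by
  induction n generalizing x with
  | zero =>
    haveI : Unique {y : S.V // S.pred^[0] y = x} :=
      { default := ⟨x, rfl⟩
        uniq := by
          rintro ⟨y, hy⟩
          simp only [Function.iterate_zero_apply] at hy
          subst hy; rfl }
    refine ⟨inferInstance, ?_⟩
    simp [Nat.card_unique]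
  | succ n ih =>
    have e : {y : S.V // S.pred^[n+1] y = x} ≃
        Σ z : {z : S.V // S.pred^[n] z = x}, {y : S.V // S.pred y = z.1} :=
      { toFun := fun y => ⟨⟨S.pred y.1, by
            rw [← Function.iterate_succ_apply]; exact y.2⟩, ⟨y.1, rfl⟩⟩
        invFun := fun p => ⟨p.2.1, by
            rw [Function.iterate_succ_apply, p.2.2]; exact p.1.2⟩
        left_inv := fun y => rfl
        right_inv := by
          rintro ⟨⟨z, hz⟩, ⟨y, (hy : S.pred y = z)⟩⟩
          subst hy
          rfl }
    obtain ⟨hfin, hcard⟩ := ih x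
    haveI := hfin
    haveI : ∀ z : {z : S.V // S.pred^[n] z = x}, Finite {y : S.V // S.pred y = z.1} :=
      fun z => (S.succ_finite z.1).to_subtype
    refine ⟨Finite.of_equiv _ e.symm, ?_⟩
    rw [Nat.card_congr e]
    haveI := Fintype.ofFinite {z : S.V // S.pred^[n] z = x}
    haveI : ∀ z : {z : S.V // S.pred^[n] z = x}, Fintype {y : S.V // S.pred y = z.1} :=
      fun z => Fintype.ofFinite _
    rw [Nat.card_eq_fintype_card, Fintype.card_sigma]
    have hz : ∀ z : {z : S.V // S.pred^[n] z = x},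
        Fintype.card {y : S.V // S.pred y = z.1} = q := by
      intro z
      rw [← Nat.card_eq_fintype_card]
      exact S.succ_card z.1
    rw [Finset.sum_congr rfl (fun z _ => hz z), Finset.sum_const, Finset.card_univ,
      ← Nat.card_eq_fintype_card, hcard]
    ring

lemma ktZc_nonneg' (m : ℤ) (hm : 1 ≤ m) : 0 ≤ ktZc m := by
  unfold ZRiesz.ktZc
  have hm' : (1 : ℝ) ≤ (m : ℝ) := by exact_mod_cast hm
  have hpi : 0 < Real.pi := Real.pi_pos
  have hs : 0 ≤ Real.sqrt 2 := Real.sqrt_nonneg 2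
  apply div_nonneg
  · positivity
  · nlinarith

lemma ktZc_ge' (n : ℕ) : (2 * Real.sqrt 2 / Real.pi) / ((n : ℝ) + 1) ≤ ktZc ((n : ℤ) + 1) := by
  unfold ZRiesz.ktZc
  have hpi : 0 < Real.pi := Real.pi_pos
  have hs : 0 < Real.sqrt 2 := Real.sqrt_pos.mpr (by norm_num)
  have hc : 0 < 2 * Real.sqrt 2 / Real.pi := by positivity
  have hn1 : (0 : ℝ) < (n : ℝ) + 1 := by positivity
  push_cast
  rw [div_le_div_iff₀ hn1 (by nlinarith)]
  nlinarith

lemma summable_Gc_term' (hq : 2 ≤ q) (n : ℕ) :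
    Summable (fun k : ℕ =>
      (q : ℝ) ^ (-(((n : ℝ)) + 2 * (k : ℝ))/2) * ktZc ((n : ℤ) + 2 * (k : ℤ) + 1)) := by
  have hq0 : (0 : ℝ) < q := by positivity
  have hqi : (q : ℝ)⁻¹ < 1 := by
    rw [inv_lt_one_iff₀]; right; exact_mod_cast lt_of_lt_of_le (by norm_num) hq
  set c : ℝ := 2 * Real.sqrt 2 / Real.pi with hc
  have hc0 : 0 ≤ c := by
    have := Real.pi_pos
    have := Real.sqrt_nonneg 2
    positivity
  have hbound : ∀ m : ℤ, 1 ≤ m → ktZc m ≤ 2 * c := by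
    intro m hm
    unfold ZRiesz.ktZc
    have hm' : (1 : ℝ) ≤ (m : ℝ) := by exact_mod_cast hm
    rw [hc, div_le_iff₀ (by nlinarith)]
    nlinarith [mul_nonneg hc0 (sq_nonneg ((m : ℝ) - 1)),
      mul_nonneg hc0 (sub_nonneg.mpr hm'), hc0, hc]
  apply Summable.of_nonneg_of_le
    (f := fun k : ℕ => ((q : ℝ) ^ (-(n : ℝ)/2) * (2 * c)) * ((q : ℝ)⁻¹) ^ k)
  · intro k
    apply mul_nonneg (Real.rpow_nonneg hq0.le _)
    exact ktZc_nonneg' _ (by omega)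
  · intro k
    have hsplit : (q : ℝ) ^ (-(((n : ℝ)) + 2 * (k : ℝ))/2)
        = (q : ℝ) ^ (-(n : ℝ)/2) * ((q : ℝ)⁻¹) ^ k := by
      rw [show (-(((n : ℝ)) + 2 * (k : ℝ))/2) = -(n : ℝ)/2 + (-(k : ℝ)) by ring,
        Real.rpow_add hq0, Real.rpow_neg hq0.le, Real.rpow_natCast, inv_pow]
    rw [hsplit, mul_assoc, mul_assoc]
    apply mul_le_mul_of_nonneg_left _ (Real.rpow_nonneg hq0.le _)
    rw [mul_comm ((q : ℝ)⁻¹ ^ k)]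
    exact mul_le_mul_of_nonneg_right (hbound _ (by omega)) (by positivity)
  · exact (summable_geometric_of_lt_one (by positivity) hqi).mul_left _

/-- The telescoping identity `Gc q n − Gc q (n+2) = q^{−n/2} k̃(n+1)`. -/
lemma Gc_sub' (hq : 2 ≤ q) (n : ℕ) :
    Gc q n - Gc q (n + 2) = (q : ℝ) ^ (-(n : ℝ)/2) * ktZc ((n : ℤ) + 1) := by
  have h1 := summable_Gc_term' hq n
  have key : Gc q n = (q : ℝ) ^ (-(n : ℝ)/2) * ktZc ((n : ℤ) + 1) + Gc q (n + 2) := by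
    unfold ZRiesz.Gc
    rw [Summable.tsum_eq_zero_add h1]
    congr 1
    · norm_num
    · apply tsum_congr
      intro k
      have he : (-(((n : ℝ)) + 2 * ((k + 1 : ℕ) : ℝ))/2)
          = (-((((n + 2) : ℕ) : ℝ) + 2 * (k : ℝ))/2) := by push_cast; ring
      have ha : ((n : ℤ) + 2 * ((k + 1 : ℕ) : ℤ) + 1)
          = ((((n + 2) : ℕ) : ℤ) + 2 * (k : ℤ) + 1) := by push_cast; ring
      rw [he, ha]
  rw [key]; ring

end AuxProof

open ZRiesz in
/-- for `x₁ ≠ x₂` with `𝔭(x₁) = 𝔭(x₂)`, the series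
`Σ_{y ≤ x₁} q^{ℓ(y)/2} (G(d(x₁,y)) − G(d(x₂,y)))` has nonnegative terms and diverges
to `+∞`. -/
theorem riesz_pairing_diverges {q : ℕ} (hq : 2 ≤ q) (S : FlowTree q)
    (x₁ x₂ : S.V) (hne : x₁ ≠ x₂) (hpp : S.pred x₁ = S.pred x₂) :
    (∀ y : S.V, S.le' y x₁ →
      0 ≤ (q : ℝ) ^ (((S.level y : ℤ) : ℝ)/2) * (Gc q (S.dist x₁ y) - Gc q (S.dist x₂ y))) ∧
    ∑' y : {y : S.V // S.le' y x₁},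
        ENNReal.ofReal ((q : ℝ) ^ (((S.level y.1 : ℤ) : ℝ)/2) *
          (Gc q (S.dist x₁ y.1) - Gc q (S.dist x₂ y.1))) = ∞ := by
  have hq0 : (0 : ℝ) < q := by positivity
  have hterm : ∀ y : S.V, S.le' y x₁ →
      Gc q (S.dist x₁ y) - Gc q (S.dist x₂ y)
        = (q : ℝ) ^ (-(S.dist x₁ y : ℝ)/2) * ktZc ((S.dist x₁ y : ℤ) + 1) := by
    intro y hy
    have hit := flowtree_iter_of_le' S x₁ y hy
    have h2 := flowtree_dist_two S x₁ x₂ hne hpp y (S.dist x₁ y) hit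
    rw [h2]
    exact Gc_sub' hq (S.dist x₁ y)
  have hpos : ∀ y : S.V, S.le' y x₁ →
      0 ≤ (q : ℝ) ^ (((S.level y : ℤ) : ℝ)/2) *
        (Gc q (S.dist x₁ y) - Gc q (S.dist x₂ y)) := by
    intro y hy
    rw [hterm y hy]
    have hk : 0 ≤ ktZc ((S.dist x₁ y : ℤ) + 1) := ktZc_nonneg' _ (by omega)
    have h1 : (0 : ℝ) ≤ (q : ℝ) ^ (((S.level y : ℤ) : ℝ)/2) := Real.rpow_nonneg hq0.le _
    have h2 : (0 : ℝ) ≤ (q : ℝ) ^ (-(S.dist x₁ y : ℝ)/2) := Real.rpow_nonneg hq0.le _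
    positivity
  refine ⟨hpos, ?_⟩
  set L : ℤ := S.level x₁ with hL
  set cn : ℕ → ℝ := fun n =>
    (q : ℝ) ^ (((L - n : ℤ) : ℝ)/2) * ((q : ℝ) ^ (-(n : ℝ)/2) * ktZc ((n : ℤ) + 1)) with hcn
  set K : ℝ := (q : ℝ) ^ (((L : ℤ) : ℝ)/2) * (2 * Real.sqrt 2 / Real.pi) with hK
  have hpi : 0 < Real.pi := Real.pi_pos
  have hs : 0 < Real.sqrt 2 := Real.sqrt_pos.mpr (by norm_num)
  have hKpos : 0 < K := by
    have : 0 < (q : ℝ) ^ (((L : ℤ) : ℝ)/2) := Real.rpow_pos_of_pos hq0 _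
    positivity
  -- the equivalence between descendants of x₁ and the sigma type over distance
  let e : (Σ n : ℕ, {y : S.V // S.pred^[n] y = x₁}) ≃ {y : S.V // S.le' y x₁} :=
    { toFun := fun p => ⟨p.2.1, flowtree_le'_of_iter S x₁ p.2.1 p.1 p.2.2⟩
      invFun := fun y => ⟨S.dist x₁ y.1, ⟨y.1, flowtree_iter_of_le' S x₁ y.1 y.2⟩⟩
      left_inv := by
        rintro ⟨n, y, hy⟩
        have hd : S.dist x₁ y = n := flowtree_dist_eq S x₁ y n hy
        subst hd
        rfl
      right_inv := fun y => rfl }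
  rw [← Equiv.tsum_eq e, ENNReal.tsum_sigma']
  -- compute each fiber sum
  have hfiber : ∀ n : ℕ,
      (∑' y : {y : S.V // S.pred^[n] y = x₁},
        ENNReal.ofReal ((q : ℝ) ^ (((S.level (e ⟨n, y⟩).1 : ℤ) : ℝ)/2) *
          (Gc q (S.dist x₁ (e ⟨n, y⟩).1) - Gc q (S.dist x₂ (e ⟨n, y⟩).1))))
      = ((q ^ n : ℕ) : ℝ≥0∞) * ENNReal.ofReal (cn n) := by
    intro n
    have hcongr : ∀ y : {y : S.V // S.pred^[n] y = x₁},
        ENNReal.ofReal ((q : ℝ) ^ (((S.level (e ⟨n, y⟩).1 : ℤ) : ℝ)/2) *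
          (Gc q (S.dist x₁ (e ⟨n, y⟩).1) - Gc q (S.dist x₂ (e ⟨n, y⟩).1)))
        = ENNReal.ofReal (cn n) := by
      rintro ⟨y, hy⟩
      have hd1 : S.dist x₁ y = n := flowtree_dist_eq S x₁ y n hy
      have hd2 : S.dist x₂ y = n + 2 := flowtree_dist_two S x₁ x₂ hne hpp y n hy
      have hlev : S.level y = L - n := by
        have := flowtree_level_iterate S y n
        rw [hy] at this
        omega
      show ENNReal.ofReal ((q : ℝ) ^ (((S.level y : ℤ) : ℝ)/2) *
          (Gc q (S.dist x₁ y) - Gc q (S.dist x₂ y))) = ENNReal.ofReal (cn n)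
      rw [hd1, hd2, hlev, hcn]
      congr 1
      rw [Gc_sub' hq n]
    rw [tsum_congr hcongr]
    obtain ⟨hfin, hcard⟩ := flowtree_card_fiber S n x₁
    haveI := hfin
    haveI := Fintype.ofFinite {y : S.V // S.pred^[n] y = x₁}
    rw [tsum_fintype, Finset.sum_const, Finset.card_univ, ← Nat.card_eq_fintype_card, hcard,
      nsmul_eq_mul]
  rw [tsum_congr hfiber]
  -- lower bound each term by K/(n+1)
  have hlow : ∀ n : ℕ,
      ENNReal.ofReal (K / ((n : ℝ) + 1)) ≤ ((q ^ n : ℕ) : ℝ≥0∞) * ENNReal.ofReal (cn n) := by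
    intro n
    have hcast : ((q ^ n : ℕ) : ℝ≥0∞) = ENNReal.ofReal ((q : ℝ) ^ n) := by
      rw [← ENNReal.ofReal_natCast (q ^ n)]
      push_cast
      rfl
    rw [hcast, ← ENNReal.ofReal_mul (by positivity)]
    apply ENNReal.ofReal_le_ofReal
    have hA : (q : ℝ) ^ n * ((q : ℝ) ^ (((L - n : ℤ) : ℝ)/2) * (q : ℝ) ^ (-(n : ℝ)/2))
        = (q : ℝ) ^ (((L : ℤ) : ℝ)/2) := by
      rw [← Real.rpow_natCast (q : ℝ) n, ← Real.rpow_add hq0, ← Real.rpow_add hq0]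
      congr 1
      push_cast
      ring
    have hEq : (q : ℝ) ^ n * cn n = (q : ℝ) ^ (((L : ℤ) : ℝ)/2) * ktZc ((n : ℤ) + 1) := by
      rw [hcn]
      calc (q : ℝ) ^ n * ((q : ℝ) ^ (((L - n : ℤ) : ℝ)/2) *
            ((q : ℝ) ^ (-(n : ℝ)/2) * ktZc ((n : ℤ) + 1)))
          = ((q : ℝ) ^ n * ((q : ℝ) ^ (((L - n : ℤ) : ℝ)/2) * (q : ℝ) ^ (-(n : ℝ)/2))) *
            ktZc ((n : ℤ) + 1) := by ring
        _ = (q : ℝ) ^ (((L : ℤ) : ℝ)/2) * ktZc ((n : ℤ) + 1) := by rw [hA]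
    rw [hEq, hK, div_eq_mul_one_div, mul_assoc]
    apply mul_le_mul_of_nonneg_left _ (Real.rpow_nonneg hq0.le _)
    calc (2 * Real.sqrt 2 / Real.pi) * (1 / ((n : ℝ) + 1))
        = (2 * Real.sqrt 2 / Real.pi) / ((n : ℝ) + 1) := by ring
      _ ≤ ktZc ((n : ℤ) + 1) := ktZc_ge' n
  -- the harmonic series diverges
  have htop : ∑' n : ℕ, ENNReal.ofReal (K / ((n : ℝ) + 1)) = ⊤ := by
    by_contra h
    have hsum := ENNReal.summable_toReal h
    have h1 : Summable (fun n : ℕ => K / ((n : ℝ) + 1)) := by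
      refine hsum.congr fun n => ?_
      rw [ENNReal.toReal_ofReal (by positivity)]
    have h2 : Summable (fun n : ℕ => 1 / ((n : ℝ) + 1)) := by
      have h3 := h1.mul_left K⁻¹
      refine h3.congr fun n => ?_
      field_simp
    have h4 : Summable (fun n : ℕ => 1 / ((n + 1 : ℕ) : ℝ)) := by
      refine h2.congr fun n => ?_
      push_cast
      ring
    have h5 : Summable (fun n : ℕ => 1 / (n : ℝ)) :=
      (summable_nat_add_iff (f := fun n : ℕ => 1 / (n : ℝ)) 1).mp h4
    exact Real.not_summable_one_div_natCast h5
  refine top_le_iff.mp ?_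
  calc (⊤ : ℝ≥0∞) = ∑' n : ℕ, ENNReal.ofReal (K / ((n : ℝ) + 1)) := htop.symm
    _ ≤ ∑' n : ℕ, ((q ^ n : ℕ) : ℝ≥0∞) * ENNReal.ofReal (cn n) := ENNReal.tsum_le_tsum hlow
end
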